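/- arXiv:1701.02960 — 3 statements merged into one kernel-verified Lean document; each statement's English description precedes it below -/
import Mathlib

section
/- Let X be an irreducible aperiodic lazy Markov chain (P(x,x) ≥ 1/2 for all x) on a finite state space S with stationary distribution π, and let π_* = min{π(x) : x ∈ S}. Then for every κ ∈ (0,1) and every x ∈ S, the mixing time satisfies τ(κ, x) ≤ 1 + ∫_{π_*}^{4/κ} 4 / (r·Φ(r)²) dr, where Φ is the conductance profile of the chain. -/
open Finset

/-- `t`-step transition probabilities of the Markov chain with one-step transition
matrix `P`. -/
def kernelPow {S : Type*} [Fintype S] [DecidableEq S] (P : S → S → ℝ) : ℕ → S → S → ℝ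
  | 0, x, y => if x = y then 1 else 0
  | t + 1, x, y => ∑ z : S, kernelPow P t x z * P z y

/-- Total variation distance `‖μ−ν‖_TV = (1/2)·Σ_x |μ x − ν x|`. -/
noncomputable def tvDist {S : Type*} [Fintype S] (μ ν : S → ℝ) : ℝ :=
  (1 / 2) * ∑ x : S, |μ x - ν x|

/-- Mixing time `τ(κ,x) = min{t : ‖P^t(x,·) − π‖_TV ≤ κ}`. -/
noncomputable def mixingTime {S : Type*} [Fintype S] [DecidableEq S]
    (P : S → S → ℝ) (π : S → ℝ) (κ : ℝ) (x : S) : ℕ :=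
  sInf {t : ℕ | tvDist (kernelPow P t x) π ≤ κ}

/-- `Q(A,Aᶜ) = Σ_{x∈A} Σ_{y∉A} π(x)·P(x,y)`. -/
noncomputable def condQ {S : Type*} [Fintype S] [DecidableEq S]
    (P : S → S → ℝ) (π : S → ℝ) (A : Finset S) : ℝ :=
  ∑ x ∈ A, ∑ y ∈ Aᶜ, π x * P x y

/-- `Φ_A = Q(A,Aᶜ)/π(A)`. -/
noncomputable def bottleneck {S : Type*} [Fintype S] [DecidableEq S]
    (P : S → S → ℝ) (π : S → ℝ) (A : Finset S) : ℝ :=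
  condQ P π A / ∑ x ∈ A, π x

/-- The conductance profile `Φ(r)`: for `0 < r ≤ 1/2` the minimum of `Φ_A` over nonempty
`A` with `π(A) ≤ r`, and `Φ(r) = Φ(1/2)` for `r > 1/2`. -/
noncomputable def profile {S : Type*} [Fintype S] [DecidableEq S]
    (P : S → S → ℝ) (π : S → ℝ) (r : ℝ) : ℝ :=
  if r ≤ 1 / 2 then
    sInf {φ | ∃ A : Finset S, A.Nonempty ∧ (∑ x ∈ A, π x) ≤ r ∧ φ = bottleneck P π A}
  else
    sInf {φ | ∃ A : Finset S, A.Nonempty ∧ (∑ x ∈ A, π x) ≤ 1 / 2 ∧ φ = bottleneck P π A}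

/-- `Φ̂ = min{Φ_A : ∅ ≠ A, π(A) ≤ 1/2}`. -/
noncomputable def condMin {S : Type*} [Fintype S] [DecidableEq S]
    (P : S → S → ℝ) (π : S → ℝ) : ℝ :=
  sInf {φ | ∃ A : Finset S, A.Nonempty ∧ (∑ x ∈ A, π x) ≤ 1 / 2 ∧ φ = bottleneck P π A}

set_option linter.unusedSectionVars false
set_option maxHeartbeats 1000000

namespace MPaux
variable {S : Type*} [Fintype S] [DecidableEq S]


variable {S : Type*} [Fintype S] [DecidableEq S]

/-- Dirichlet form. -/
noncomputable def En (P : S → S → ℝ) (π : S → ℝ) (g : S → ℝ) : ℝ :=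
  (1/2) * ∑ z : S, ∑ y : S, π z * P z y * (g y - g z)^2

/-- weighted L² norm squared -/
noncomputable def N2 (π : S → ℝ) (g : S → ℝ) : ℝ := ∑ y : S, π y * g y ^ 2

noncomputable def pm (π : S → ℝ) (A : Finset S) : ℝ := ∑ y ∈ A, π y

noncomputable def suppF (u : S → ℝ) : Finset S := Finset.univ.filter (fun y => u y ≠ 0)

lemma kernelPow_nonneg (P : S → S → ℝ) (hP0 : ∀ x y, 0 ≤ P x y) (t : ℕ) (x y : S) :
    0 ≤ kernelPow P t x y := by
  induction t generalizing y with
  | zero => simp [kernelPow]; positivity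
  | succ t ih =>
      simp only [kernelPow]
      exact Finset.sum_nonneg fun z _ => mul_nonneg (by
        induction t generalizing z with
        | zero => simp [kernelPow]; positivity
        | succ s ihs => exact ih z) (hP0 z y)

lemma kernelPow_rowsum (P : S → S → ℝ) (hP1 : ∀ x, ∑ y : S, P x y = 1) (t : ℕ) (x : S) :
    ∑ y : S, kernelPow P t x y = 1 := by
  induction t with
  | zero => simp [kernelPow]
  | succ t ih =>
      simp only [kernelPow]
      rw [Finset.sum_comm]
      calc ∑ z : S, ∑ y : S, kernelPow P t x z * P z y
          = ∑ z : S, kernelPow P t x z * ∑ y : S, P z y := by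
            simp [Finset.mul_sum]
        _ = 1 := by simp [hP1]; exact ih

lemma En_nonneg (P : S → S → ℝ) (π : S → ℝ) (hP0 : ∀ x y, 0 ≤ P x y)
    (hπpos : ∀ x, 0 < π x) (g : S → ℝ) : 0 ≤ En P π g := by
  unfold En
  have h2 : (0:ℝ) ≤ ∑ z : S, ∑ y : S, π z * P z y * (g y - g z)^2 :=
    Finset.sum_nonneg fun z _ =>
      Finset.sum_nonneg fun y _ => mul_nonneg (mul_nonneg (hπpos z).le (hP0 z y)) (sq_nonneg _)
  linarith

lemma N2_nonneg (π : S → ℝ) (hπpos : ∀ x, 0 < π x) (g : S → ℝ) : 0 ≤ N2 π g :=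
  Finset.sum_nonneg fun y _ => mul_nonneg (hπpos y).le (sq_nonneg _)

lemma En_mono (P : S → S → ℝ) (π : S → ℝ) (hP0 : ∀ x y, 0 ≤ P x y)
    (hπpos : ∀ x, 0 < π x) (u g : S → ℝ)
    (h : ∀ y z, (u y - u z)^2 ≤ (g y - g z)^2) : En P π u ≤ En P π g := by
  unfold En
  have : ∀ z y : S, π z * P z y * (u y - u z)^2 ≤ π z * P z y * (g y - g z)^2 := fun z y =>
    mul_le_mul_of_nonneg_left (h y z) (mul_nonneg (hπpos z).le (hP0 z y))
  have hs : ∑ z : S, ∑ y : S, π z * P z y * (u y - u z)^2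
      ≤ ∑ z : S, ∑ y : S, π z * P z y * (g y - g z)^2 :=
    Finset.sum_le_sum fun z _ => Finset.sum_le_sum fun y _ => this z y
  linarith

/-- Jensen-type contraction for a nonnegative kernel with row sums `π y` and
column sums `π z`. -/
lemma contraction (π : S → ℝ) (hπpos : ∀ x, 0 < π x) (w : S → S → ℝ)
    (hw0 : ∀ y z, 0 ≤ w y z) (hrow : ∀ y, ∑ z : S, w y z = π y)
    (hcol : ∀ z, ∑ y : S, w y z = π z) (g : S → ℝ) :
    ∑ y : S, (∑ z : S, w y z * g z)^2 / π y ≤ ∑ z : S, π z * g z ^ 2 := by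
  have key : ∀ y : S, (∑ z : S, w y z * g z)^2 / π y ≤ ∑ z : S, w y z * g z ^ 2 := by
    intro y
    have cs := Finset.sum_mul_sq_le_sq_mul_sq Finset.univ
      (fun z => Real.sqrt (w y z)) (fun z => Real.sqrt (w y z) * g z)
    have e1 : ∀ z : S, Real.sqrt (w y z) * (Real.sqrt (w y z) * g z) = w y z * g z := by
      intro z; rw [← mul_assoc, Real.mul_self_sqrt (hw0 y z)]
    have e2 : ∀ z : S, Real.sqrt (w y z) ^ 2 = w y z := fun z => Real.sq_sqrt (hw0 y z)
    have e3 : ∀ z : S, (Real.sqrt (w y z) * g z) ^ 2 = w y z * g z ^ 2 := by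
      intro z; rw [mul_pow, e2]
    rw [show (∑ z : S, Real.sqrt (w y z) * (Real.sqrt (w y z) * g z))
        = ∑ z : S, w y z * g z from Finset.sum_congr rfl fun z _ => e1 z,
      show (∑ z : S, Real.sqrt (w y z) ^ 2) = ∑ z : S, w y z from
        Finset.sum_congr rfl fun z _ => e2 z,
      show (∑ z : S, (Real.sqrt (w y z) * g z) ^ 2) = ∑ z : S, w y z * g z ^ 2 from
        Finset.sum_congr rfl fun z _ => e3 z, hrow] at cs
    rw [div_le_iff₀ (hπpos y)]
    linarith [cs]
  calc ∑ y : S, (∑ z : S, w y z * g z)^2 / π y ≤ ∑ y : S, ∑ z : S, w y z * g z ^ 2 :=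
        Finset.sum_le_sum fun y _ => key y
    _ = ∑ z : S, π z * g z ^ 2 := by
        rw [Finset.sum_comm]
        exact Finset.sum_congr rfl fun z _ => by rw [← Finset.sum_mul, hcol, mul_comm]


lemma En_eq (P : S → S → ℝ) (π : S → ℝ)
    (hP1 : ∀ x, ∑ y : S, P x y = 1) (hstat : ∀ y, ∑ x : S, π x * P x y = π y) (g : S → ℝ) :
    En P π g = N2 π g - ∑ y : S, (∑ z : S, π z * P z y * g z) * g y := by
  unfold En N2
  have expand : ∀ z y : S, π z * P z y * (g y - g z)^2
      = π z * P z y * g y ^2 + π z * P z y * g z ^2 - 2 * (π z * P z y * g z * g y) := by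
    intro z y; ring
  rw [show (∑ z : S, ∑ y : S, π z * P z y * (g y - g z)^2)
      = (∑ z : S, ∑ y : S, π z * P z y * g y ^2) + (∑ z : S, ∑ y : S, π z * P z y * g z ^2)
        - 2 * (∑ z : S, ∑ y : S, π z * P z y * g z * g y) by
    rw [← Finset.sum_add_distrib, Finset.mul_sum, ← Finset.sum_sub_distrib]
    refine Finset.sum_congr rfl fun z _ => ?_
    rw [← Finset.sum_add_distrib, Finset.mul_sum, ← Finset.sum_sub_distrib]
    exact Finset.sum_congr rfl fun y _ => expand z y]
  have h1 : (∑ z : S, ∑ y : S, π z * P z y * g y ^2) = ∑ y : S, π y * g y ^2 := by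
    rw [Finset.sum_comm]
    refine Finset.sum_congr rfl fun y _ => ?_
    rw [show (∑ z : S, π z * P z y * g y ^ 2) = (∑ z : S, π z * P z y) * g y ^2 from
      (Finset.sum_mul _ _ _).symm, hstat]
  have h2 : (∑ z : S, ∑ y : S, π z * P z y * g z ^2) = ∑ z : S, π z * g z ^2 := by
    refine Finset.sum_congr rfl fun z _ => ?_
    rw [show (∑ y : S, π z * P z y * g z ^ 2) = (∑ y : S, P z y) * (π z * g z ^2) by
      rw [Finset.sum_mul]; exact Finset.sum_congr rfl fun y _ => by ring, hP1]
    ring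
  have h3 : (∑ z : S, ∑ y : S, π z * P z y * g z * g y)
      = ∑ y : S, (∑ z : S, π z * P z y * g z) * g y := by
    rw [Finset.sum_comm]
    exact Finset.sum_congr rfl fun y _ => (Finset.sum_mul _ _ _).symm
  rw [h1, h2, h3]; ring

lemma decay (P : S → S → ℝ) (π : S → ℝ)
    (hP0 : ∀ x y, 0 ≤ P x y) (hP1 : ∀ x, ∑ y : S, P x y = 1)
    (hlazy : ∀ x, 1 / 2 ≤ P x x) (hπpos : ∀ x, 0 < π x)
    (hstat : ∀ y, ∑ x : S, π x * P x y = π y) (g : S → ℝ) :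
    N2 π (fun y => (∑ z : S, π z * P z y * g z) / π y) ≤ N2 π g - En P π g := by
  set s : S → ℝ := fun y => ∑ z : S, π z * P z y * g z with hs
  have key : ∑ y : S, s y ^2 / π y ≤ ∑ y : S, s y * g y := by
    set w : S → S → ℝ := fun y z => 2 * (π z * P z y) - (if z = y then π z else 0) with hw
    have hw0 : ∀ y z, 0 ≤ w y z := by
      intro y z
      by_cases h : z = y
      · subst h; simp only [hw, if_pos rfl]
        simp only [if_true]
        nlinarith [hπpos z, hlazy z]
      · simp only [hw, if_neg h]
        nlinarith [hπpos z, hP0 z y]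
    have hrow : ∀ y, ∑ z : S, w y z = π y := by
      intro y
      simp only [hw]
      rw [Finset.sum_sub_distrib]
      rw [show (∑ z : S, 2 * (π z * P z y)) = 2 * ∑ z : S, π z * P z y by
        rw [Finset.mul_sum], hstat]
      rw [Finset.sum_ite_eq' Finset.univ y (fun z => π z)]
      simp; ring
    have hcol : ∀ z, ∑ y : S, w y z = π z := by
      intro z
      simp only [hw]
      rw [Finset.sum_sub_distrib]
      rw [show (∑ y : S, 2 * (π z * P z y)) = 2 * π z * ∑ y : S, P z y by
        rw [Finset.mul_sum]; exact Finset.sum_congr rfl fun y _ => by ring, hP1 z]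
      rw [show (∑ y : S, if z = y then π z else 0) = π z by
        rw [Finset.sum_ite_eq Finset.univ z (fun _ => π z)]; simp]
      ring
    have hc := contraction π hπpos w hw0 hrow hcol g
    have hMs : ∀ y : S, (∑ z : S, w y z * g z) = 2 * s y - π y * g y := by
      intro y
      simp only [hw, hs]
      rw [show (∑ z : S, (2 * (π z * P z y) - if z = y then π z else 0) * g z)
          = (∑ z : S, 2 * (π z * P z y * g z)) - ∑ z : S, (if z = y then π z else 0) * g z by
        rw [← Finset.sum_sub_distrib]; exact Finset.sum_congr rfl fun z _ => by ring]
      rw [← Finset.mul_sum]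
      rw [show (∑ z : S, (if z = y then π z else 0) * g z)
          = ∑ z : S, (if z = y then π z * g z else 0) from
        Finset.sum_congr rfl fun z _ => by split <;> simp]
      rw [Finset.sum_ite_eq' Finset.univ y (fun z => π z * g z)]
      simp
    rw [show (∑ y : S, (∑ z : S, w y z * g z)^2 / π y)
        = ∑ y : S, (4 * (s y ^2 / π y) - 4 * (s y * g y) + π y * g y ^2) from
      Finset.sum_congr rfl fun y _ => by
        rw [hMs y]
        have hy := (hπpos y).ne'
        field_simp
        ring] at hc
    rw [Finset.sum_add_distrib, Finset.sum_sub_distrib, ← Finset.mul_sum, ← Finset.mul_sum] at hc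
    have hN : ∑ y : S, π y * g y ^ 2 = N2 π g := rfl
    linarith [hc]
  have hEn := En_eq P π hP1 hstat g
  have hN2K : N2 π (fun y => s y / π y) = ∑ y : S, s y ^2 / π y := by
    unfold N2
    refine Finset.sum_congr rfl fun y _ => ?_
    have hy := (hπpos y).ne'
    field_simp
  calc N2 π (fun y => s y / π y) = ∑ y : S, s y ^2 / π y := hN2K
    _ ≤ ∑ y : S, s y * g y := key
    _ = N2 π g - En P π g := by rw [hEn]; ring




def Cand (P : S → S → ℝ) (π : S → ℝ) (m : ℝ) : Set ℝ :=
  {φ | ∃ A : Finset S, A.Nonempty ∧ pm π A ≤ m ∧ φ = bottleneck P π A}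

lemma Cand_finite (P : S → S → ℝ) (π : S → ℝ) (m : ℝ) : (Cand P π m).Finite := by
  apply Set.Finite.subset (Set.finite_range (bottleneck P π))
  rintro φ ⟨A, -, -, rfl⟩
  exact ⟨A, rfl⟩

lemma bottleneck_nonneg (P : S → S → ℝ) (π : S → ℝ) (hP0 : ∀ x y, 0 ≤ P x y)
    (hπpos : ∀ x, 0 < π x) (A : Finset S) : 0 ≤ bottleneck P π A := by
  apply div_nonneg
  · exact Finset.sum_nonneg fun x _ => Finset.sum_nonneg fun y _ =>
      mul_nonneg (hπpos x).le (hP0 x y)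
  · exact Finset.sum_nonneg fun x _ => (hπpos x).le

lemma Cand_bddBelow (P : S → S → ℝ) (π : S → ℝ) (hP0 : ∀ x y, 0 ≤ P x y)
    (hπpos : ∀ x, 0 < π x) (m : ℝ) : BddBelow (Cand P π m) :=
  ⟨0, by rintro φ ⟨A, -, -, rfl⟩; exact bottleneck_nonneg P π hP0 hπpos A⟩

lemma profile_eq (P : S → S → ℝ) (π : S → ℝ) (r : ℝ) :
    profile P π r = sInf (Cand P π (min r (1/2))) := by
  unfold profile
  by_cases h : r ≤ 1/2
  · rw [if_pos h, min_eq_left h]; rfl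
  · rw [if_neg h, min_eq_right (le_of_not_ge h)]; rfl

lemma condMin_eq (P : S → S → ℝ) (π : S → ℝ) :
    condMin P π = sInf (Cand P π (1/2)) := rfl

lemma pm_pos (π : S → ℝ) (hπpos : ∀ x, 0 < π x) {A : Finset S} (hA : A.Nonempty) :
    0 < pm π A := Finset.sum_pos (fun x _ => hπpos x) hA

lemma pm_nonneg (π : S → ℝ) (hπpos : ∀ x, 0 < π x) (A : Finset S) :
    0 ≤ pm π A := Finset.sum_nonneg (fun x _ => (hπpos x).le)

lemma compl_nonempty (π : S → ℝ) (hπpos : ∀ x, 0 < π x) (hπ1 : ∑ x : S, π x = 1)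
    {A : Finset S} (hA : pm π A ≤ 1/2) : Aᶜ.Nonempty := by
  rw [Finset.nonempty_iff_ne_empty]
  intro h
  have : A = Finset.univ := by
    rwa [Finset.compl_eq_empty_iff] at h
  rw [this] at hA
  unfold pm at hA
  rw [hπ1] at hA
  norm_num at hA

lemma condQ_pos (P : S → S → ℝ) (π : S → ℝ) (hP0 : ∀ x y, 0 ≤ P x y)
    (hπpos : ∀ x, 0 < π x) (hirr : ∀ x y, ∃ t, 0 < kernelPow P t x y)
    {A : Finset S} (hA : A.Nonempty) (hAc : Aᶜ.Nonempty) : 0 < condQ P π A := by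
  by_contra h
  push_neg at h
  have hzero : ∀ x ∈ A, ∀ y ∈ Aᶜ, P x y = 0 := by
    intro x hx y hy
    have hterms : ∀ x ∈ A, ∀ y ∈ Aᶜ, (0:ℝ) ≤ π x * P x y := fun x _ y _ =>
      mul_nonneg (hπpos x).le (hP0 x y)
    have : ∀ x ∈ A, ∀ y ∈ Aᶜ, π x * P x y = 0 := by
      intro x hx y hy
      have h1 : condQ P π A = 0 := le_antisymm h
        (Finset.sum_nonneg fun x hx => Finset.sum_nonneg fun y hy => hterms x hx y hy)
      have h2 := (Finset.sum_eq_zero_iff_of_nonneg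
        (fun x hx => Finset.sum_nonneg fun y hy => hterms x hx y hy)).1 h1 x hx
      exact (Finset.sum_eq_zero_iff_of_nonneg (fun y hy => hterms x hx y hy)).1 h2 y hy
    have := this x hx y hy
    rcases mul_eq_zero.1 this with h' | h'
    · exact absurd h' (hπpos x).ne'
    · exact h'
  have hker : ∀ t, ∀ x ∈ A, ∀ y ∈ Aᶜ, kernelPow P t x y = 0 := by
    intro t
    induction t with
    | zero =>
        intro x hx y hy
        simp only [kernelPow]
        rw [if_neg]
        intro hxy
        subst hxy
        exact (Finset.mem_compl.1 hy) hx
    | succ t ih =>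
        intro x hx y hy
        simp only [kernelPow]
        apply Finset.sum_eq_zero
        intro z _
        by_cases hz : z ∈ A
        · rw [hzero z hz y hy, mul_zero]
        · rw [ih x hx z (Finset.mem_compl.2 hz), zero_mul]
  obtain ⟨x, hx⟩ := hA
  obtain ⟨y, hy⟩ := hAc
  obtain ⟨t, ht⟩ := hirr x y
  rw [hker t x hx y hy] at ht
  exact lt_irrefl 0 ht

lemma bottleneck_pos (P : S → S → ℝ) (π : S → ℝ) (hP0 : ∀ x y, 0 ≤ P x y)
    (hπpos : ∀ x, 0 < π x) (hπ1 : ∑ x : S, π x = 1)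
    (hirr : ∀ x y, ∃ t, 0 < kernelPow P t x y)
    {A : Finset S} (hA : A.Nonempty) (hAhalf : pm π A ≤ 1/2) :
    0 < bottleneck P π A :=
  div_pos (condQ_pos P π hP0 hπpos hirr hA (compl_nonempty π hπpos hπ1 hAhalf))
    (pm_pos π hπpos hA)

lemma bottleneck_le_half (P : S → S → ℝ) (π : S → ℝ) (hP0 : ∀ x y, 0 ≤ P x y)
    (hP1 : ∀ x, ∑ y : S, P x y = 1) (hlazy : ∀ x, 1 / 2 ≤ P x x)
    (hπpos : ∀ x, 0 < π x) {A : Finset S} (hA : A.Nonempty) :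
    bottleneck P π A ≤ 1/2 := by
  unfold bottleneck condQ
  rw [show (∑ x ∈ A, π x) = pm π A from rfl, div_le_iff₀ (pm_pos π hπpos hA)]
  have key : ∀ x ∈ A, ∑ y ∈ Aᶜ, π x * P x y ≤ 1/2 * π x := by
    intro x hx
    rw [← Finset.mul_sum]
    have h1 : ∑ y ∈ Aᶜ, P x y = 1 - ∑ y ∈ A, P x y := by
      have := hP1 x
      rw [← Finset.sum_add_sum_compl A (fun y => P x y)] at this
      linarith
    have h2 : P x x ≤ ∑ y ∈ A, P x y :=
      Finset.single_le_sum (fun y _ => hP0 x y) hx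
    have h3 : ∑ y ∈ Aᶜ, P x y ≤ 1/2 := by
      rw [h1]; linarith [hlazy x]
    calc π x * ∑ y ∈ Aᶜ, P x y ≤ π x * (1/2) :=
          mul_le_mul_of_nonneg_left h3 (hπpos x).le
      _ = 1/2 * π x := by ring
  calc ∑ x ∈ A, ∑ y ∈ Aᶜ, π x * P x y ≤ ∑ x ∈ A, 1/2 * π x :=
        Finset.sum_le_sum key
    _ = 1/2 * pm π A := by rw [← Finset.mul_sum]; rfl

lemma profile_le (P : S → S → ℝ) (π : S → ℝ) (hP0 : ∀ x y, 0 ≤ P x y)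
    (hπpos : ∀ x, 0 < π x) {r : ℝ} {A : Finset S} (hA : A.Nonempty)
    (h1 : pm π A ≤ r) (h2 : pm π A ≤ 1/2) :
    profile P π r ≤ bottleneck P π A := by
  rw [profile_eq]
  exact csInf_le (Cand_bddBelow P π hP0 hπpos _) ⟨A, hA, le_min h1 h2, rfl⟩

lemma profile_nonneg (P : S → S → ℝ) (π : S → ℝ) (hP0 : ∀ x y, 0 ≤ P x y)
    (hπpos : ∀ x, 0 < π x) (r : ℝ) : 0 ≤ profile P π r := by
  rw [profile_eq]
  rcases Set.eq_empty_or_nonempty (Cand P π (min r (1/2))) with h | h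
  · rw [h, Real.sInf_empty]
  · apply le_csInf h
    rintro φ ⟨A, -, -, rfl⟩
    exact bottleneck_nonneg P π hP0 hπpos A

lemma profile_mem (P : S → S → ℝ) (π : S → ℝ) {r : ℝ}
    (h : (Cand P π (min r (1/2))).Nonempty) :
    profile P π r ∈ Cand P π (min r (1/2)) := by
  rw [profile_eq]
  exact h.csInf_mem (Cand_finite P π _)

lemma profile_anti (P : S → S → ℝ) (π : S → ℝ) (hP0 : ∀ x y, 0 ≤ P x y)
    (hπpos : ∀ x, 0 < π x) {r₁ r₂ : ℝ} (h12 : r₁ ≤ r₂)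
    (hne : (Cand P π (min r₁ (1/2))).Nonempty) :
    profile P π r₂ ≤ profile P π r₁ := by
  rw [profile_eq, profile_eq]
  apply csInf_le_csInf (Cand_bddBelow P π hP0 hπpos _) hne
  rintro φ ⟨A, hA, hm, rfl⟩
  exact ⟨A, hA, le_trans hm (by exact min_le_min h12 (le_refl _)), rfl⟩

lemma profile_pos (P : S → S → ℝ) (π : S → ℝ) (hP0 : ∀ x y, 0 ≤ P x y)
    (hπpos : ∀ x, 0 < π x) (hπ1 : ∑ x : S, π x = 1)
    (hirr : ∀ x y, ∃ t, 0 < kernelPow P t x y) {r : ℝ}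
    (hne : (Cand P π (min r (1/2))).Nonempty) : 0 < profile P π r := by
  obtain ⟨A, hA, hm, hb⟩ := profile_mem P π hne
  rw [hb]
  exact bottleneck_pos P π hP0 hπpos hπ1 hirr hA (le_trans hm (min_le_right _ _))

lemma profile_le_half (P : S → S → ℝ) (π : S → ℝ) (hP0 : ∀ x y, 0 ≤ P x y)
    (hP1 : ∀ x, ∑ y : S, P x y = 1) (hlazy : ∀ x, 1 / 2 ≤ P x x)
    (hπpos : ∀ x, 0 < π x) {r : ℝ}
    (hne : (Cand P π (min r (1/2))).Nonempty) : profile P π r ≤ 1/2 := by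
  obtain ⟨A, hA, hm, hb⟩ := profile_mem P π hne
  rw [hb]
  exact bottleneck_le_half P π hP0 hP1 hlazy hπpos hA

lemma profile_eq_condMin (P : S → S → ℝ) (π : S → ℝ) {r : ℝ} (hr : 1/2 ≤ r) :
    profile P π r = condMin P π := by
  rw [profile_eq, condMin_eq, min_eq_right hr]


lemma sum_q_right (P : S → S → ℝ) (π : S → ℝ)
    (hstat : ∀ y, ∑ x : S, π x * P x y = π y) (v : S → ℝ) :
    ∑ z : S, ∑ y : S, π z * P z y * v y = ∑ y : S, π y * v y := by
  rw [Finset.sum_comm]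
  refine Finset.sum_congr rfl fun y _ => ?_
  rw [show (∑ z : S, π z * P z y * v y) = (∑ z : S, π z * P z y) * v y from
    (Finset.sum_mul _ _ _).symm, hstat]

lemma sum_q_left (P : S → S → ℝ) (π : S → ℝ)
    (hP1 : ∀ x, ∑ y : S, P x y = 1) (v : S → ℝ) :
    ∑ z : S, ∑ y : S, π z * P z y * v z = ∑ z : S, π z * v z := by
  refine Finset.sum_congr rfl fun z _ => ?_
  rw [show (∑ y : S, π z * P z y * v z) = (∑ y : S, P z y) * (π z * v z) by
    rw [Finset.sum_mul]; exact Finset.sum_congr rfl fun y _ => by ring, hP1]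
  ring

lemma balance (P : S → S → ℝ) (π : S → ℝ)
    (hP1 : ∀ x, ∑ y : S, P x y = 1) (hstat : ∀ y, ∑ x : S, π x * P x y = π y)
    (A : Finset S) :
    condQ P π A = ∑ z ∈ Aᶜ, ∑ y ∈ A, π z * P z y := by
  have h1 : ∑ z ∈ A, ∑ y : S, π z * P z y = pm π A := by
    unfold pm
    refine Finset.sum_congr rfl fun z _ => ?_
    rw [← Finset.mul_sum, hP1, mul_one]
  have h2 : ∑ z : S, ∑ y ∈ A, π z * P z y = pm π A := by
    rw [Finset.sum_comm]
    refine Finset.sum_congr rfl fun y _ => ?_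
    rw [show (∑ z : S, π z * P z y) = π y from hstat y]
  have h3 : ∀ z : S, ∑ y : S, π z * P z y
      = (∑ y ∈ A, π z * P z y) + ∑ y ∈ Aᶜ, π z * P z y := fun z =>
    (Finset.sum_add_sum_compl A _).symm
  have h4 : ∑ z : S, ∑ y ∈ A, π z * P z y
      = (∑ z ∈ A, ∑ y ∈ A, π z * P z y) + ∑ z ∈ Aᶜ, ∑ y ∈ A, π z * P z y :=
    (Finset.sum_add_sum_compl A _).symm
  have h5 : ∑ z ∈ A, ∑ y : S, π z * P z y
      = (∑ z ∈ A, ∑ y ∈ A, π z * P z y) + ∑ z ∈ A, ∑ y ∈ Aᶜ, π z * P z y := by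
    rw [← Finset.sum_add_distrib]
    exact Finset.sum_congr rfl fun z _ => h3 z
  unfold condQ
  have := h1
  rw [h5] at this
  rw [h4] at h2
  linarith

lemma cheeger (P : S → S → ℝ) (π : S → ℝ)
    (hP0 : ∀ x y, 0 ≤ P x y) (hP1 : ∀ x, ∑ y : S, P x y = 1)
    (hπpos : ∀ x, 0 < π x) (hstat : ∀ y, ∑ x : S, π x * P x y = π y)
    (u : S → ℝ) (hu : ∀ y, 0 ≤ u y) (hsupp : pm π (suppF u) ≤ 1/2) :
    profile P π (pm π (suppF u)) ^ 2 / 2 * N2 π u ≤ En P π u := by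
  classical
  by_cases hN : N2 π u = 0
  · rw [hN, mul_zero]
    exact En_nonneg P π hP0 hπpos u
  have hN2nn : 0 ≤ N2 π u := N2_nonneg π hπpos u
  have hNpos : 0 < N2 π u := lt_of_le_of_ne hN2nn (Ne.symm hN)
  set Φ := profile P π (pm π (suppF u)) with hΦdef
  have hΦ0 : 0 ≤ Φ := profile_nonneg P π hP0 hπpos _
  set M : ℝ := ∑ y : S, u y ^ 2 with hM
  have hM0 : 0 ≤ M := Finset.sum_nonneg fun y _ => sq_nonneg _
  have huM : ∀ y : S, u y ^ 2 ≤ M := fun y =>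
    Finset.single_le_sum (fun z _ => sq_nonneg (u z)) (Finset.mem_univ y)
  -- characteristic functions
  set χ : ℝ → ℝ → ℝ := fun s t => if t ≤ s then 1 else 0 with hχ
  have hχ_eq : ∀ s : ℝ, χ s = Set.indicator (Set.Iic s) (fun _ => (1:ℝ)) := by
    intro s; funext t
    simp [hχ, Set.indicator_apply, Set.mem_Iic]
  have hIoc_fin : MeasureTheory.volume (Set.Ioc (0:ℝ) M) < ⊤ := measure_Ioc_lt_top
  have hχ_int : ∀ s : ℝ, MeasureTheory.IntegrableOn (χ s) (Set.Ioc (0:ℝ) M) := by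
    intro s
    rw [hχ_eq s]
    exact (MeasureTheory.integrableOn_const hIoc_fin.ne).indicator
      measurableSet_Iic |>.mono_set (by intro t ht; exact ht)
  -- integral of χ s over Ioc 0 M equals s for 0 ≤ s ≤ M
  have hχ_integral : ∀ s : ℝ, 0 ≤ s → s ≤ M →
      ∫ t in Set.Ioc (0:ℝ) M, χ s t = s := by
    intro s hs0 hsM
    rw [hχ_eq s, MeasureTheory.setIntegral_indicator measurableSet_Iic]
    have : Set.Ioc (0:ℝ) M ∩ Set.Iic s = Set.Ioc 0 s := by
      ext t
      simp only [Set.mem_inter_iff, Set.mem_Ioc, Set.mem_Iic]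
      constructor
      · rintro ⟨⟨h1, _⟩, h3⟩; exact ⟨h1, h3⟩
      · rintro ⟨h1, h2⟩; exact ⟨⟨h1, le_trans h2 hsM⟩, h2⟩
    rw [this]
    simp [Real.volume_Ioc, ENNReal.toReal_ofReal hs0, hs0]
  -- integral of |χ a - χ b| equals |a - b| for a,b in [0,M]
  have habs_eq : ∀ a b : ℝ, 0 ≤ a → 0 ≤ b → a ≤ M → b ≤ M →
      (fun t => |χ a t - χ b t|)
        = Set.indicator (Set.Ioc (min a b) (max a b)) (fun _ => (1:ℝ)) := by
    intro a b _ _ _ _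
    funext t
    simp only [hχ, Set.indicator_apply, Set.mem_Ioc]
    rcases le_or_gt t a with h1 | h1 <;> rcases le_or_gt t b with h2 | h2
    · rw [if_pos h1, if_pos h2]
      simp only [sub_self, abs_zero]
      rw [if_neg]
      rintro ⟨hmin, -⟩
      rcases min_cases a b with ⟨hm, -⟩ | ⟨hm, -⟩ <;> rw [hm] at hmin <;> linarith
    · rw [if_pos h1, if_neg (not_le.2 h2)]
      rw [if_pos]
      · norm_num
      · constructor
        · exact lt_of_le_of_lt (min_le_right a b) h2
        · exact le_trans h1 (le_max_left a b)
    · rw [if_neg (not_le.2 h1), if_pos h2]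
      rw [if_pos]
      · norm_num
      · constructor
        · exact lt_of_le_of_lt (min_le_left a b) h1
        · exact le_trans h2 (le_max_right a b)
    · rw [if_neg (not_le.2 h1), if_neg (not_le.2 h2)]
      simp only [sub_self, abs_zero]
      rw [if_neg]
      rintro ⟨-, hmax⟩
      rcases max_cases a b with ⟨hm, -⟩ | ⟨hm, -⟩ <;> rw [hm] at hmax <;> linarith
  have habs_integral : ∀ a b : ℝ, 0 ≤ a → 0 ≤ b → a ≤ M → b ≤ M →
      ∫ t in Set.Ioc (0:ℝ) M, |χ a t - χ b t| = |a - b| := by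
    intro a b ha0 hb0 haM hbM
    rw [habs_eq a b ha0 hb0 haM hbM,
      MeasureTheory.setIntegral_indicator measurableSet_Ioc]
    have hsub : Set.Ioc (min a b) (max a b) ⊆ Set.Ioc (0:ℝ) M := by
      intro t ht
      rcases ht with ⟨h1, h2⟩
      constructor
      · exact lt_of_le_of_lt (le_min ha0 hb0) h1
      · exact le_trans h2 (max_le haM hbM)
    rw [Set.inter_eq_right.2 hsub]
    have hminmax : min a b ≤ max a b := le_trans (min_le_left a b) (le_max_left a b)
    have hvol : ∫ t in Set.Ioc (min a b) (max a b), (1:ℝ)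
        = max a b - min a b := by
      simp [Real.volume_Ioc, ENNReal.toReal_ofReal (by linarith : (0:ℝ) ≤ max a b - min a b)]
    rw [hvol]
    rcases le_total a b with h | h
    · rw [max_eq_right h, min_eq_left h,
        abs_of_nonpos (by linarith : a - b ≤ 0)]
      ring
    · rw [max_eq_left h, min_eq_right h,
        abs_of_nonneg (by linarith : (0:ℝ) ≤ a - b)]
  have habs_int : ∀ a b : ℝ, MeasureTheory.IntegrableOn
      (fun t => |χ a t - χ b t|) (Set.Ioc (0:ℝ) M) :=
    fun a b => ((hχ_int a).sub (hχ_int b)).abs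
  -- the two integral identities
  have hG_int : MeasureTheory.IntegrableOn
      (fun t => ∑ y : S, π y * χ (u y ^ 2) t) (Set.Ioc (0:ℝ) M) :=
    MeasureTheory.integrable_finset_sum _ fun y _ => (hχ_int _).const_mul _
  have hF_int : MeasureTheory.IntegrableOn
      (fun t => ∑ z : S, ∑ y : S, π z * P z y * |χ (u y ^ 2) t - χ (u z ^ 2) t|)
      (Set.Ioc (0:ℝ) M) :=
    MeasureTheory.integrable_finset_sum _ fun z _ =>
      MeasureTheory.integrable_finset_sum _ fun y _ => (habs_int _ _).const_mul _
  have hG_eval : ∫ t in Set.Ioc (0:ℝ) M, (∑ y : S, π y * χ (u y ^ 2) t) = N2 π u := by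
    rw [MeasureTheory.integral_finset_sum _ fun y _ => (hχ_int _).const_mul _]
    unfold N2
    refine Finset.sum_congr rfl fun y _ => ?_
    rw [MeasureTheory.integral_const_mul, hχ_integral _ (sq_nonneg _) (huM y)]
  have hF_eval : ∫ t in Set.Ioc (0:ℝ) M,
      (∑ z : S, ∑ y : S, π z * P z y * |χ (u y ^ 2) t - χ (u z ^ 2) t|)
      = ∑ z : S, ∑ y : S, π z * P z y * |u y ^ 2 - u z ^ 2| := by
    rw [MeasureTheory.integral_finset_sum _ fun z _ =>
      MeasureTheory.integrable_finset_sum _ fun y _ => (habs_int _ _).const_mul _]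
    refine Finset.sum_congr rfl fun z _ => ?_
    rw [MeasureTheory.integral_finset_sum _ fun y _ => (habs_int _ _).const_mul _]
    refine Finset.sum_congr rfl fun y _ => ?_
    rw [MeasureTheory.integral_const_mul,
      habs_integral _ _ (sq_nonneg _) (sq_nonneg _) (huM y) (huM z)]
  -- pointwise inequality on Ioc 0 M
  have hpointwise : ∀ t ∈ Set.Ioc (0:ℝ) M,
      2 * Φ * (∑ y : S, π y * χ (u y ^ 2) t)
        ≤ ∑ z : S, ∑ y : S, π z * P z y * |χ (u y ^ 2) t - χ (u z ^ 2) t| := by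
    intro t ht
    obtain ⟨ht0, htM⟩ := ht
    set A : Finset S := Finset.univ.filter (fun y => t ≤ u y ^ 2) with hA
    have hmem : ∀ y : S, y ∈ A ↔ t ≤ u y ^ 2 := by
      intro y; simp [hA]
    have hGt : (∑ y : S, π y * χ (u y ^ 2) t) = pm π A := by
      unfold pm
      rw [Finset.sum_filter]
      refine Finset.sum_congr rfl fun y _ => ?_
      simp only [hχ]
      split <;> simp
    have hAsub : A ⊆ suppF u := by
      intro y hy
      rw [hmem] at hy
      simp only [suppF, Finset.mem_filter, Finset.mem_univ, true_and]
      intro h0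
      rw [h0] at hy
      simp at hy
      linarith
    have hpmA : pm π A ≤ pm π (suppF u) :=
      Finset.sum_le_sum_of_subset_of_nonneg hAsub fun y _ _ => (hπpos y).le
    -- split double sum into blocks
    have hsplit : ∑ z : S, ∑ y : S, π z * P z y * |χ (u y ^ 2) t - χ (u z ^ 2) t|
        = (∑ z ∈ A, ∑ y ∈ Aᶜ, π z * P z y * |χ (u y ^ 2) t - χ (u z ^ 2) t|)
          + (∑ z ∈ Aᶜ, ∑ y ∈ A, π z * P z y * |χ (u y ^ 2) t - χ (u z ^ 2) t|)
          + ((∑ z ∈ A, ∑ y ∈ A, π z * P z y * |χ (u y ^ 2) t - χ (u z ^ 2) t|)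
          + (∑ z ∈ Aᶜ, ∑ y ∈ Aᶜ, π z * P z y * |χ (u y ^ 2) t - χ (u z ^ 2) t|)) := by
      rw [← Finset.sum_add_sum_compl A
        (fun z => ∑ y : S, π z * P z y * |χ (u y ^ 2) t - χ (u z ^ 2) t|)]
      have e1 : ∀ z : S, (∑ y : S, π z * P z y * |χ (u y ^ 2) t - χ (u z ^ 2) t|)
          = (∑ y ∈ A, π z * P z y * |χ (u y ^ 2) t - χ (u z ^ 2) t|)
            + ∑ y ∈ Aᶜ, π z * P z y * |χ (u y ^ 2) t - χ (u z ^ 2) t| := fun z =>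
        (Finset.sum_add_sum_compl A _).symm
      rw [Finset.sum_congr rfl fun z _ => e1 z, Finset.sum_add_distrib,
        Finset.sum_congr rfl fun z _ => e1 z, Finset.sum_add_distrib]
      ring
    have hdiag : ∀ (B : Finset S), (∀ y ∈ B, ∀ z ∈ B,
        |χ (u y ^ 2) t - χ (u z ^ 2) t| = 0) →
        (∑ z ∈ B, ∑ y ∈ B, π z * P z y * |χ (u y ^ 2) t - χ (u z ^ 2) t|) = 0 := by
      intro B hB
      apply Finset.sum_eq_zero
      intro z hz
      apply Finset.sum_eq_zero
      intro y hy
      rw [hB y hy z hz, mul_zero]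
    have hchiA : ∀ y ∈ A, χ (u y ^ 2) t = 1 := by
      intro y hy; rw [hmem] at hy; simp [hχ, hy]
    have hchiAc : ∀ y ∈ Aᶜ, χ (u y ^ 2) t = 0 := by
      intro y hy
      rw [Finset.mem_compl, hmem] at hy
      simp [hχ, hy]
    have hd1 : (∑ z ∈ A, ∑ y ∈ A, π z * P z y * |χ (u y ^ 2) t - χ (u z ^ 2) t|) = 0 :=
      hdiag A fun y hy z hz => by rw [hchiA y hy, hchiA z hz]; simp
    have hd2 : (∑ z ∈ Aᶜ, ∑ y ∈ Aᶜ, π z * P z y * |χ (u y ^ 2) t - χ (u z ^ 2) t|) = 0 :=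
      hdiag Aᶜ fun y hy z hz => by rw [hchiAc y hy, hchiAc z hz]; simp
    have hoff1 : (∑ z ∈ A, ∑ y ∈ Aᶜ, π z * P z y * |χ (u y ^ 2) t - χ (u z ^ 2) t|)
        = condQ P π A := by
      unfold condQ
      refine Finset.sum_congr rfl fun z hz => Finset.sum_congr rfl fun y hy => ?_
      rw [hchiAc y hy, hchiA z hz]
      simp
    have hoff2 : (∑ z ∈ Aᶜ, ∑ y ∈ A, π z * P z y * |χ (u y ^ 2) t - χ (u z ^ 2) t|)
        = condQ P π A := by
      rw [balance P π hP1 hstat A]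
      refine Finset.sum_congr rfl fun z hz => Finset.sum_congr rfl fun y hy => ?_
      rw [hchiA y hy, hchiAc z hz]
      simp
    rw [hsplit, hd1, hd2, hoff1, hoff2, hGt]
    rcases Finset.eq_empty_or_nonempty A with hAe | hAne
    · rw [hAe]
      unfold pm condQ
      simp
    · have hQ : Φ * pm π A ≤ condQ P π A := by
        have hle : Φ ≤ bottleneck P π A :=
          profile_le P π hP0 hπpos hAne hpmA (le_trans hpmA hsupp)
        have hpmApos := pm_pos π hπpos hAne
        have h2 : Φ * pm π A ≤ bottleneck P π A * pm π A :=
          mul_le_mul_of_nonneg_right hle (pm_pos π hπpos hAne).le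
        have h3 : bottleneck P π A * pm π A = condQ P π A := by
          show condQ P π A / (∑ x ∈ A, π x) * pm π A = condQ P π A
          have : (∑ x ∈ A, π x) = pm π A := rfl
          rw [this]
          exact div_mul_cancel₀ _ hpmApos.ne'
        rw [h3] at h2
        exact h2
      linarith
  -- integrate the pointwise inequality
  have hmono := MeasureTheory.setIntegral_mono_on
    (hG_int.const_mul (2 * Φ)) hF_int measurableSet_Ioc hpointwise
  rw [hF_eval] at hmono
  have h2ΦG : ∫ t in Set.Ioc (0:ℝ) M, 2 * Φ * (∑ y : S, π y * χ (u y ^ 2) t)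
      = 2 * Φ * N2 π u := by
    rw [MeasureTheory.integral_const_mul, hG_eval]
  rw [h2ΦG] at hmono
  -- Cauchy-Schwarz step
  set LHS := ∑ z : S, ∑ y : S, π z * P z y * |u y ^ 2 - u z ^ 2| with hLHS
  have habs_factor : ∀ y z : S, |u y ^ 2 - u z ^ 2| = |u y - u z| * (u y + u z) := by
    intro y z
    rw [show u y ^2 - u z ^2 = (u y - u z) * (u y + u z) by ring, abs_mul,
      abs_of_nonneg (show (0:ℝ) ≤ u y + u z by linarith [hu y, hu z])]
  have hq0 : ∀ z y : S, 0 ≤ π z * P z y := fun z y => mul_nonneg (hπpos z).le (hP0 z y)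
  have hpair : ∀ f : S → S → ℝ, (∑ p : S × S, f p.1 p.2) = ∑ z : S, ∑ y : S, f z y := by
    intro f
    rw [← Finset.univ_product_univ, Finset.sum_product]
  have hcs : LHS ^ 2 ≤ (2 * En P π u) * (4 * N2 π u) := by
    have key := Finset.sum_mul_sq_le_sq_mul_sq Finset.univ
      (fun p : S × S => Real.sqrt (π p.1 * P p.1 p.2) * |u p.2 - u p.1|)
      (fun p : S × S => Real.sqrt (π p.1 * P p.1 p.2) * (u p.2 + u p.1))
    have e1 : ∀ p : S × S,
        (Real.sqrt (π p.1 * P p.1 p.2) * |u p.2 - u p.1|)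
          * (Real.sqrt (π p.1 * P p.1 p.2) * (u p.2 + u p.1))
        = π p.1 * P p.1 p.2 * |u p.2 ^ 2 - u p.1 ^ 2| := by
      intro p
      rw [habs_factor p.2 p.1]
      rw [show (Real.sqrt (π p.1 * P p.1 p.2) * |u p.2 - u p.1|)
          * (Real.sqrt (π p.1 * P p.1 p.2) * (u p.2 + u p.1))
          = (Real.sqrt (π p.1 * P p.1 p.2) * Real.sqrt (π p.1 * P p.1 p.2))
            * (|u p.2 - u p.1| * (u p.2 + u p.1)) by ring,
        Real.mul_self_sqrt (hq0 p.1 p.2)]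
    have e2 : ∀ p : S × S, (Real.sqrt (π p.1 * P p.1 p.2) * |u p.2 - u p.1|) ^ 2
        = π p.1 * P p.1 p.2 * (u p.2 - u p.1)^2 := by
      intro p
      rw [mul_pow, Real.sq_sqrt (hq0 p.1 p.2), sq_abs]
    have e3 : ∀ p : S × S, (Real.sqrt (π p.1 * P p.1 p.2) * (u p.2 + u p.1)) ^ 2
        = π p.1 * P p.1 p.2 * (u p.2 + u p.1)^2 := by
      intro p
      rw [mul_pow, Real.sq_sqrt (hq0 p.1 p.2)]
    rw [Finset.sum_congr rfl fun p _ => e1 p, Finset.sum_congr rfl fun p _ => e2 p,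
      Finset.sum_congr rfl fun p _ => e3 p] at key
    have prod1 : (∑ p : S × S, π p.1 * P p.1 p.2 * |u p.2 ^ 2 - u p.1 ^ 2|) = LHS := by
      rw [hpair (fun z y => π z * P z y * |u y ^ 2 - u z ^ 2|)]
    have prod2 : (∑ p : S × S, π p.1 * P p.1 p.2 * (u p.2 - u p.1)^2) = 2 * En P π u := by
      rw [hpair (fun z y => π z * P z y * (u y - u z)^2)]
      unfold En
      ring
    have prod3 : (∑ p : S × S, π p.1 * P p.1 p.2 * (u p.2 + u p.1)^2) ≤ 4 * N2 π u := by
      have hb : ∀ p : S × S, π p.1 * P p.1 p.2 * (u p.2 + u p.1)^2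
          ≤ π p.1 * P p.1 p.2 * (2 * u p.2 ^2 + 2 * u p.1 ^2) := by
        intro p
        apply mul_le_mul_of_nonneg_left _ (hq0 p.1 p.2)
        nlinarith [sq_nonneg (u p.2 - u p.1)]
      have step1 : (∑ p : S × S, π p.1 * P p.1 p.2 * (u p.2 + u p.1)^2)
          ≤ ∑ p : S × S, π p.1 * P p.1 p.2 * (2 * u p.2 ^2 + 2 * u p.1 ^2) :=
        Finset.sum_le_sum fun p _ => hb p
      have step2 : (∑ p : S × S, π p.1 * P p.1 p.2 * (2 * u p.2 ^2 + 2 * u p.1 ^2))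
          = 4 * N2 π u := by
        rw [hpair (fun z y => π z * P z y * (2 * u y ^2 + 2 * u z ^2))]
        calc ∑ z : S, ∑ y : S, π z * P z y * (2 * u y ^2 + 2 * u z ^2)
            = ∑ z : S, (2 * (∑ y : S, π z * P z y * u y ^2)
              + 2 * (∑ y : S, π z * P z y * u z ^2)) := by
              refine Finset.sum_congr rfl fun z _ => ?_
              rw [Finset.mul_sum, Finset.mul_sum, ← Finset.sum_add_distrib]
              exact Finset.sum_congr rfl fun y _ => by ring
          _ = 2 * (∑ z : S, ∑ y : S, π z * P z y * u y ^2)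
              + 2 * (∑ z : S, ∑ y : S, π z * P z y * u z ^2) := by
              rw [Finset.sum_add_distrib, ← Finset.mul_sum, ← Finset.mul_sum]
          _ = 4 * N2 π u := by
              rw [sum_q_right P π hstat (fun y => u y ^2),
                sum_q_left P π hP1 (fun z => u z ^2)]
              unfold N2
              ring
      linarith
    calc LHS ^2 = (∑ p : S × S, π p.1 * P p.1 p.2 * |u p.2 ^ 2 - u p.1 ^ 2|)^2 := by
          rw [prod1]
      _ ≤ (∑ p : S × S, π p.1 * P p.1 p.2 * (u p.2 - u p.1)^2)
          * ∑ p : S × S, π p.1 * P p.1 p.2 * (u p.2 + u p.1)^2 := key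
      _ ≤ (2 * En P π u) * (4 * N2 π u) := by
          apply mul_le_mul (le_of_eq prod2) prod3
          · exact Finset.sum_nonneg fun p _ => mul_nonneg (hq0 p.1 p.2) (sq_nonneg _)
          · have := En_nonneg P π hP0 hπpos u
            linarith
  -- combine
  have hfinal : (2 * Φ * N2 π u)^2 ≤ (2 * En P π u) * (4 * N2 π u) := by
    have hL0 : 0 ≤ 2 * Φ * N2 π u := by positivity
    calc (2 * Φ * N2 π u)^2 ≤ LHS ^2 := by
          apply sq_le_sq' _ hmono
          linarith
      _ ≤ _ := hcs
  nlinarith [hNpos, hfinal]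

lemma lip_sq {a b c d : ℝ} (h : |a - b| ≤ |c - d|) : (a - b)^2 ≤ (c - d)^2 := by
  rw [← sq_abs (a-b), ← sq_abs (c-d)]
  exact pow_le_pow_left₀ (abs_nonneg _) h 2

lemma max_lip (a c e : ℝ) : |max a e - max c e| ≤ |a - c| := by
  have := abs_max_sub_max_le_max a e c e
  simpa using this

lemma exists_median (π : S → ℝ) [Nonempty S] (hπpos : ∀ x, 0 < π x)
    (hπ1 : ∑ x : S, π x = 1) (g : S → ℝ) :
    ∃ α : ℝ, pm π (Finset.univ.filter (fun y => α < g y)) ≤ 1/2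
      ∧ pm π (Finset.univ.filter (fun y => g y < α)) ≤ 1/2 := by
  classical
  set C : Finset S := Finset.univ.filter
    (fun a => 1/2 ≤ pm π (Finset.univ.filter (fun y => g y ≤ g a))) with hC
  have hCne : C.Nonempty := by
    obtain ⟨a₀, -, ha₀⟩ := Finset.exists_max_image Finset.univ g Finset.univ_nonempty
    refine ⟨a₀, ?_⟩
    simp only [hC, Finset.mem_filter, Finset.mem_univ, true_and]
    have : Finset.univ.filter (fun y => g y ≤ g a₀) = Finset.univ := by
      apply Finset.filter_true_of_mem
      intro y _
      exact ha₀ y (Finset.mem_univ y)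
    rw [this]
    unfold pm
    rw [hπ1]
    norm_num
  obtain ⟨a₁, ha₁C, ha₁min⟩ := Finset.exists_min_image C g hCne
  refine ⟨g a₁, ?_, ?_⟩
  · have hmem : 1/2 ≤ pm π (Finset.univ.filter (fun y => g y ≤ g a₁)) := by
      simp only [hC, Finset.mem_filter, Finset.mem_univ, true_and] at ha₁C
      exact ha₁C
    have hsplit : pm π (Finset.univ.filter (fun y => g y ≤ g a₁))
        + pm π (Finset.univ.filter (fun y => g a₁ < g y)) = 1 := by
      unfold pm
      rw [show (Finset.univ.filter (fun y => g a₁ < g y))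
          = Finset.univ.filter (fun y => ¬ (g y ≤ g a₁)) by
        apply Finset.filter_congr
        intro y _
        simp [not_le], Finset.sum_filter_add_sum_filter_not, hπ1]
    linarith
  · by_contra hcon
    push_neg at hcon
    set B : Finset S := Finset.univ.filter (fun y => g y < g a₁) with hB
    have hBne : B.Nonempty := by
      rw [Finset.nonempty_iff_ne_empty]
      intro he
      rw [he] at hcon
      unfold pm at hcon
      simp at hcon
      linarith
    obtain ⟨b, hbB, hbmax⟩ := Finset.exists_max_image B g hBne
    have hgb : g b < g a₁ := by
      simp only [hB, Finset.mem_filter, Finset.mem_univ, true_and] at hbB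
      exact hbB
    have hsub : B ⊆ Finset.univ.filter (fun y => g y ≤ g b) := by
      intro y hy
      have hy' : g y < g a₁ := by
        simp only [hB, Finset.mem_filter, Finset.mem_univ, true_and] at hy
        exact hy
      simp only [Finset.mem_filter, Finset.mem_univ, true_and]
      exact hbmax y (by simp only [hB, Finset.mem_filter, Finset.mem_univ, true_and]; exact hy')
    have hpm : 1/2 ≤ pm π (Finset.univ.filter (fun y => g y ≤ g b)) := by
      have := Finset.sum_le_sum_of_subset_of_nonneg hsub
        (fun y _ _ => (hπpos y).le)
      unfold pm at *
      linarith
    have hbC : b ∈ C := by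
      simp only [hC, Finset.mem_filter, Finset.mem_univ, true_and]
      exact hpm
    have := ha₁min b hbC
    linarith

lemma gap (P : S → S → ℝ) (π : S → ℝ) [Nonempty S]
    (hP0 : ∀ x y, 0 ≤ P x y) (hP1 : ∀ x, ∑ y : S, P x y = 1)
    (hπpos : ∀ x, 0 < π x) (hπ1 : ∑ x : S, π x = 1)
    (hstat : ∀ y, ∑ x : S, π x * P x y = π y)
    (g : S → ℝ) (hmean : ∑ y : S, π y * g y = 0) :
    condMin P π ^ 2 / 2 * N2 π g ≤ En P π g := by
  classical
  obtain ⟨α, hup, hdown⟩ := exists_median π hπpos hπ1 g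
  set hp : S → ℝ := fun y => max (g y - α) 0 with hhp
  set hm : S → ℝ := fun y => max (α - g y) 0 with hhm
  have hcM0 : 0 ≤ condMin P π := by
    rw [condMin_eq]
    rcases Set.eq_empty_or_nonempty (Cand P π (1/2)) with h | h
    · rw [h, Real.sInf_empty]
    · apply le_csInf h
      rintro φ ⟨A, -, -, rfl⟩
      exact bottleneck_nonneg P π hP0 hπpos A
  -- generic claim for a nonneg function with support of measure ≤ 1/2
  have key : ∀ u : S → ℝ, (∀ y, 0 ≤ u y) → pm π (suppF u) ≤ 1/2 →
      condMin P π ^2 / 2 * N2 π u ≤ En P π u := by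
    intro u hu hs
    rcases Finset.eq_empty_or_nonempty (suppF u) with hse | hsne
    · have hz : ∀ y : S, u y = 0 := by
        intro y
        by_contra h0
        have : y ∈ suppF u := by
          simp [suppF, h0]
        rw [hse] at this
        simp at this
      have : N2 π u = 0 := by
        unfold N2
        apply Finset.sum_eq_zero
        intro y _
        rw [hz y]
        ring
      rw [this, mul_zero]
      exact En_nonneg P π hP0 hπpos u
    · have hch := cheeger P π hP0 hP1 hπpos hstat u hu hs
      have hle : condMin P π ≤ profile P π (pm π (suppF u)) := by
        rw [condMin_eq, profile_eq]
        apply csInf_le_csInf (Cand_bddBelow P π hP0 hπpos _)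
        · exact ⟨bottleneck P π (suppF u), suppF u, hsne, le_min (le_refl _) hs, rfl⟩
        · rintro φ ⟨A, hA, hmm, rfl⟩
          exact ⟨A, hA, le_trans hmm (min_le_right _ _), rfl⟩
      have hsq : condMin P π ^2 ≤ profile P π (pm π (suppF u)) ^2 := by
        apply pow_le_pow_left₀ hcM0 hle
      have hN2 := N2_nonneg π hπpos u
      nlinarith [hch]
  have h1 : pm π (suppF hp) ≤ 1/2 := by
    have : suppF hp = Finset.univ.filter (fun y => α < g y) := by
      apply Finset.filter_congr
      intro y _
      simp only [hhp]
      constructor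
      · intro h
        by_contra hc
        push_neg at hc
        rw [max_eq_right (by linarith : g y - α ≤ 0)] at h
        exact h rfl
      · intro h
        rw [max_eq_left (by linarith : (0:ℝ) ≤ g y - α)]
        intro hc
        linarith
    rw [this]
    exact hup
  have h2 : pm π (suppF hm) ≤ 1/2 := by
    have : suppF hm = Finset.univ.filter (fun y => g y < α) := by
      apply Finset.filter_congr
      intro y _
      simp only [hhm]
      constructor
      · intro h
        by_contra hc
        push_neg at hc
        rw [max_eq_right (by linarith : α - g y ≤ 0)] at h
        exact h rfl
      · intro h
        rw [max_eq_left (by linarith : (0:ℝ) ≤ α - g y)]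
        intro hc
        linarith
    rw [this]
    exact hdown
  have kp := key hp (fun y => le_max_right _ _) h1
  have km := key hm (fun y => le_max_right _ _) h2
  -- En decomposition
  have hEsplit : En P π hp + En P π hm ≤ En P π g := by
    unfold En
    rw [← mul_add]
    apply mul_le_mul_of_nonneg_left _ (by norm_num : (0:ℝ) ≤ 1/2)
    rw [← Finset.sum_add_distrib]
    apply Finset.sum_le_sum
    intro z _
    rw [← Finset.sum_add_distrib]
    apply Finset.sum_le_sum
    intro y _
    rw [← mul_add]
    apply mul_le_mul_of_nonneg_left _ (mul_nonneg (hπpos z).le (hP0 z y))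
    have e1 : hp y - hm y = g y - α := by
      simp only [hhp, hhm]
      rcases le_total (g y) α with h | h
      · rw [max_eq_right (by linarith), max_eq_left (by linarith)]
        ring
      · rw [max_eq_left (by linarith), max_eq_right (by linarith)]
        ring
    have e2 : hp z - hm z = g z - α := by
      simp only [hhp, hhm]
      rcases le_total (g z) α with h | h
      · rw [max_eq_right (by linarith), max_eq_left (by linarith)]
        ring
      · rw [max_eq_left (by linarith), max_eq_right (by linarith)]
        ring
    have e3 : g y - g z = (hp y - hm y) - (hp z - hm z) := by
      rw [e1, e2]; ring
    have c1 : 0 ≤ hp y * hm z := mul_nonneg (le_max_right _ _) (le_max_right _ _)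
    have c2 : 0 ≤ hp z * hm y := mul_nonneg (le_max_right _ _) (le_max_right _ _)
    have c3 : hp y * hm y = 0 := by
      simp only [hhp, hhm]
      rcases le_total (g y) α with h | h
      · rw [max_eq_right (by linarith : g y - α ≤ 0)]; ring
      · rw [max_eq_right (by linarith : α - g y ≤ 0)]; ring
    have c4 : hp z * hm z = 0 := by
      simp only [hhp, hhm]
      rcases le_total (g z) α with h | h
      · rw [max_eq_right (by linarith : g z - α ≤ 0)]; ring
      · rw [max_eq_right (by linarith : α - g z ≤ 0)]; ring
    rw [e3]
    nlinarith [c1, c2, c3, c4]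
  -- N2 decomposition
  have hN2split : N2 π hp + N2 π hm = N2 π g + α ^2 := by
    have e : ∀ y : S, π y * hp y ^2 + π y * hm y ^2 = π y * (g y - α)^2 := by
      intro y
      have : hp y ^2 + hm y ^2 = (g y - α)^2 := by
        simp only [hhp, hhm]
        rcases le_total (g y) α with h | h
        · rw [max_eq_right (by linarith : g y - α ≤ 0),
            max_eq_left (by linarith : (0:ℝ) ≤ α - g y)]
          ring
        · rw [max_eq_left (by linarith : (0:ℝ) ≤ g y - α),
            max_eq_right (by linarith : α - g y ≤ 0)]
          ring
      calc π y * hp y ^2 + π y * hm y ^2 = π y * (hp y ^2 + hm y ^2) := by ring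
        _ = π y * (g y - α)^2 := by rw [this]
    unfold N2
    rw [← Finset.sum_add_distrib, Finset.sum_congr rfl fun y _ => e y]
    have : ∀ y : S, π y * (g y - α)^2
        = π y * g y ^2 - 2 * α * (π y * g y) + α^2 * π y := by
      intro y; ring
    rw [Finset.sum_congr rfl fun y _ => this y]
    rw [Finset.sum_add_distrib, Finset.sum_sub_distrib, ← Finset.mul_sum, ← Finset.mul_sum,
      hmean, hπ1]
    ring
  have hsq0 : 0 ≤ condMin P π ^2 / 2 := by positivity
  nlinarith [kp, km, hEsplit, hN2split, sq_nonneg α, hsq0]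

lemma phase1 (P : S → S → ℝ) (π : S → ℝ)
    (hP0 : ∀ x y, 0 ≤ P x y) (hP1 : ∀ x, ∑ y : S, P x y = 1)
    (hπpos : ∀ x, 0 < π x) (hπ1 : ∑ x : S, π x = 1)
    (hstat : ∀ y, ∑ x : S, π x * P x y = π y)
    (f : S → ℝ) (hf0 : ∀ y, 0 ≤ f y) (hf1 : ∑ y : S, π y * f y = 1)
    (hV : 200 ≤ N2 π (fun y => f y - 1)) :
    profile P π (100 / N2 π (fun y => f y - 1)) ^ 2 / 4 * N2 π (fun y => f y - 1)
      ≤ En P π (fun y => f y - 1) := by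
  classical
  set g : S → ℝ := fun y => f y - 1 with hg
  set V : ℝ := N2 π g with hVd
  have hVpos : 0 < V := by linarith
  set a : ℝ := V / 100 with ha
  have ha2 : 2 ≤ a := by rw [ha]; linarith
  set u : S → ℝ := fun y => max (g y - a) 0 with hu
  have hu0 : ∀ y, 0 ≤ u y := fun y => le_max_right _ _
  have husupp : ∀ y : S, y ∈ suppF u ↔ a < g y := by
    intro y
    simp only [suppF, Finset.mem_filter, Finset.mem_univ, true_and, hu]
    constructor
    · intro h
      by_contra hc
      push_neg at hc
      rw [max_eq_right (by linarith : g y - a ≤ 0)] at h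
      exact h rfl
    · intro h
      rw [max_eq_left (by linarith : (0:ℝ) ≤ g y - a)]
      intro hc
      linarith
  have hgm1 : ∀ y, -1 ≤ g y := fun y => by
    simp only [hg]
    linarith [hf0 y]
  have hmean : ∑ y : S, π y * g y = 0 := by
    have : ∀ y : S, π y * g y = π y * f y - π y := by
      intro y; simp only [hg]; ring
    rw [Finset.sum_congr rfl fun y _ => this y, Finset.sum_sub_distrib, hf1, hπ1]
    ring
  -- Markov bound
  have hmarkov : (1 + a) * pm π (suppF u) ≤ 1 := by
    have step : ∀ y ∈ suppF u, π y * (1 + a) ≤ π y * f y := by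
      intro y hy
      rw [husupp] at hy
      apply mul_le_mul_of_nonneg_left _ (hπpos y).le
      simp only [hg] at hy
      linarith
    have h1 : ∑ y ∈ suppF u, π y * (1 + a) ≤ ∑ y ∈ suppF u, π y * f y :=
      Finset.sum_le_sum step
    have h2 : ∑ y ∈ suppF u, π y * f y ≤ ∑ y : S, π y * f y :=
      Finset.sum_le_sum_of_subset_of_nonneg (Finset.subset_univ _)
        (fun y _ _ => mul_nonneg (hπpos y).le (hf0 y))
    have h3 : ∑ y ∈ suppF u, π y * (1 + a) = (1 + a) * pm π (suppF u) := by
      unfold pm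
      rw [Finset.mul_sum]
      exact Finset.sum_congr rfl fun y _ => by ring
    rw [← h3, hf1] at *
    linarith
  have hpm0 : 0 ≤ pm π (suppF u) := pm_nonneg π hπpos _
  have hpm_half : pm π (suppF u) ≤ 1/2 := by
    nlinarith [hmarkov, hpm0]
  have hpm_100V : pm π (suppF u) ≤ 100 / V := by
    rw [show (100:ℝ)/V = 1/a by rw [ha]; field_simp]
    rw [le_div_iff₀ (by linarith : (0:ℝ) < a)]
    nlinarith [hmarkov, hpm0, ha2]
  -- lower bound on N2 u
  have hN2u : V / 2 ≤ N2 π u := by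
    have hsplitV : V = (∑ y ∈ suppF u, π y * g y ^2)
        + ∑ y ∈ (suppF u)ᶜ, π y * g y ^2 := by
      rw [hVd]
      unfold N2
      exact (Finset.sum_add_sum_compl (suppF u) _).symm
    have hsuppg0 : ∀ y ∈ suppF u, 0 ≤ π y * g y := by
      intro y hy
      rw [husupp] at hy
      exact mul_nonneg (hπpos y).le (by linarith)
    have hcomp_neg : ∑ y ∈ (suppF u)ᶜ, π y * g y ≤ 0 := by
      have := Finset.sum_add_sum_compl (suppF u) (fun y => π y * g y)
      rw [hmean] at this
      have hs : 0 ≤ ∑ y ∈ suppF u, π y * g y := Finset.sum_nonneg hsuppg0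
      linarith
    have hcomp : ∑ y ∈ (suppF u)ᶜ, π y * g y ^2
        ≤ a * (∑ y ∈ (suppF u)ᶜ, π y * g y) + (a + 1) := by
      have hpc : ∀ y ∈ (suppF u)ᶜ, π y * g y ^2 ≤ a * (π y * g y) + (a+1) * π y := by
        intro y hy
        rw [Finset.mem_compl, husupp] at hy
        push_neg at hy
        have h1 : (a - g y) * (g y + 1) ≥ 0 :=
          mul_nonneg (by linarith) (by linarith [hgm1 y])
        have h2 : g y ^2 ≤ a * g y + a + 1 := by nlinarith [hgm1 y]
        nlinarith [(hπpos y).le, h2]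
      calc ∑ y ∈ (suppF u)ᶜ, π y * g y ^2
          ≤ ∑ y ∈ (suppF u)ᶜ, (a * (π y * g y) + (a+1) * π y) :=
            Finset.sum_le_sum hpc
        _ = a * (∑ y ∈ (suppF u)ᶜ, π y * g y) + (a+1) * ∑ y ∈ (suppF u)ᶜ, π y := by
            rw [Finset.sum_add_distrib, ← Finset.mul_sum, ← Finset.mul_sum]
        _ ≤ a * (∑ y ∈ (suppF u)ᶜ, π y * g y) + (a + 1) := by
            have hle1 : ∑ y ∈ (suppF u)ᶜ, π y ≤ 1 := by
              rw [← hπ1]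
              exact Finset.sum_le_sum_of_subset_of_nonneg (Finset.subset_univ _)
                (fun y _ _ => (hπpos y).le)
            nlinarith [ha2]
    have hsupp_bound : ∑ y ∈ suppF u, π y * g y ^2
        ≤ 3 * a^2 * pm π (suppF u) + (3/2) * N2 π u := by
      have hps : ∀ y ∈ suppF u, π y * g y ^2 ≤ 3 * a^2 * π y + (3/2) * (π y * u y ^2) := by
        intro y hy
        have hy' := (husupp y).1 hy
        have huy : u y = g y - a := by
          simp only [hu]
          rw [max_eq_left (by linarith : (0:ℝ) ≤ g y - a)]
        have hgen : ∀ w b : ℝ, w^2 ≤ 3*b^2 + (3/2)*(w-b)^2 := fun w b => by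
          nlinarith [sq_nonneg (w - 3*b)]
        have hgy2 : g y ^2 ≤ 3 * a^2 + (3/2) * (g y - a)^2 := hgen (g y) a
        rw [huy]
        nlinarith [(hπpos y).le, hgy2]
      calc ∑ y ∈ suppF u, π y * g y ^2
          ≤ ∑ y ∈ suppF u, (3 * a^2 * π y + (3/2) * (π y * u y ^2)) :=
            Finset.sum_le_sum hps
        _ = 3 * a^2 * pm π (suppF u) + (3/2) * ∑ y ∈ suppF u, π y * u y ^2 := by
            rw [Finset.sum_add_distrib, ← Finset.mul_sum, ← Finset.mul_sum]
            rfl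
        _ ≤ 3 * a^2 * pm π (suppF u) + (3/2) * N2 π u := by
            have : ∑ y ∈ suppF u, π y * u y ^2 ≤ N2 π u := by
              unfold N2
              exact Finset.sum_le_sum_of_subset_of_nonneg (Finset.subset_univ _)
                (fun y _ _ => mul_nonneg (hπpos y).le (sq_nonneg _))
            linarith
    have h3a : 3 * a^2 * pm π (suppF u) ≤ 3 * a := by
      nlinarith [hmarkov, hpm0, ha2]
    have hacomp : a * (∑ y ∈ (suppF u)ᶜ, π y * g y) ≤ 0 :=
      mul_nonpos_of_nonneg_of_nonpos (by linarith) hcomp_neg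
    -- combine: V ≤ (a+1) + 3a + 1.5 N2u
    have hVle : V ≤ (a + 1) + 3 * a + (3/2) * N2 π u := by
      calc V = (∑ y ∈ suppF u, π y * g y ^2) + ∑ y ∈ (suppF u)ᶜ, π y * g y ^2 := hsplitV
        _ ≤ (3 * a^2 * pm π (suppF u) + (3/2) * N2 π u)
            + (a * (∑ y ∈ (suppF u)ᶜ, π y * g y) + (a + 1)) := by
            linarith [hsupp_bound, hcomp]
        _ ≤ (a + 1) + 3 * a + (3/2) * N2 π u := by
            linarith [h3a, hacomp]
    rw [ha] at hVle
    linarith [hVle, hV]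
  -- support nonempty
  have hsne : (suppF u).Nonempty := by
    rw [Finset.nonempty_iff_ne_empty]
    intro he
    have : N2 π u = 0 := by
      unfold N2
      apply Finset.sum_eq_zero
      intro y _
      have : u y = 0 := by
        by_contra h0
        have : y ∈ suppF u := by simp [suppF, h0]
        rw [he] at this
        simp at this
      rw [this]
      ring
    rw [this] at hN2u
    linarith
  -- Cheeger + antitone
  have hch := cheeger P π hP0 hP1 hπpos hstat u hu0 hpm_half
  have hanti : profile P π (100 / V) ≤ profile P π (pm π (suppF u)) := by
    apply profile_anti P π hP0 hπpos hpm_100V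
    exact ⟨bottleneck P π (suppF u), suppF u, hsne, le_min (le_refl _) hpm_half, rfl⟩
  have hprof0 : 0 ≤ profile P π (100 / V) := profile_nonneg P π hP0 hπpos _
  have hsq : profile P π (100 / V) ^2 ≤ profile P π (pm π (suppF u)) ^2 :=
    pow_le_pow_left₀ hprof0 hanti 2
  have hEmono : En P π u ≤ En P π g := by
    apply En_mono P π hP0 hπpos
    intro y z
    apply lip_sq
    calc |u y - u z| ≤ |(g y - a) - (g z - a)| := max_lip _ _ _
      _ = |g y - g z| := by ring_nf
  have hN2u0 : 0 ≤ N2 π u := N2_nonneg π hπpos u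
  calc profile P π (100 / V) ^ 2 / 4 * V
      ≤ profile P π (100 / V) ^ 2 / 2 * N2 π u := by nlinarith [hN2u]
    _ ≤ profile P π (pm π (suppF u)) ^2 / 2 * N2 π u := by nlinarith [hN2u0]
    _ ≤ En P π u := hch
    _ ≤ En P π g := hEmono

lemma tv_le (π : S → ℝ) (hπpos : ∀ x, 0 < π x) (hπ1 : ∑ x : S, π x = 1) (μ : S → ℝ) :
    tvDist μ π ≤ 1/2 * Real.sqrt (N2 π (fun y => μ y / π y - 1)) := by
  set G : S → ℝ := fun y => μ y / π y - 1 with hG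
  have habs : ∀ y : S, |μ y - π y| = π y * |G y| := by
    intro y
    have hy := (hπpos y).ne'
    rw [show π y * |G y| = |π y| * |G y| by rw [abs_of_pos (hπpos y)], ← abs_mul]
    congr 1
    simp only [hG]
    field_simp
  have hcs : (∑ y : S, π y * |G y|)^2 ≤ N2 π G := by
    have key := Finset.sum_mul_sq_le_sq_mul_sq Finset.univ
      (fun y => Real.sqrt (π y)) (fun y => Real.sqrt (π y) * |G y|)
    have e1 : ∀ y : S, Real.sqrt (π y) * (Real.sqrt (π y) * |G y|) = π y * |G y| := by
      intro y
      rw [← mul_assoc, Real.mul_self_sqrt (hπpos y).le]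
    have e2 : ∀ y : S, Real.sqrt (π y) ^2 = π y := fun y => Real.sq_sqrt (hπpos y).le
    have e3 : ∀ y : S, (Real.sqrt (π y) * |G y|)^2 = π y * G y ^2 := by
      intro y
      rw [mul_pow, Real.sq_sqrt (hπpos y).le, sq_abs]
    rw [Finset.sum_congr rfl fun y _ => e1 y, Finset.sum_congr rfl fun y _ => e2 y,
      Finset.sum_congr rfl fun y _ => e3 y, hπ1, one_mul] at key
    exact key
  have hsum_nonneg : 0 ≤ ∑ y : S, π y * |G y| :=
    Finset.sum_nonneg fun y _ => mul_nonneg (hπpos y).le (abs_nonneg _)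
  have hle : ∑ y : S, π y * |G y| ≤ Real.sqrt (N2 π G) :=
    (Real.le_sqrt hsum_nonneg (N2_nonneg π hπpos G)).2 hcs
  unfold tvDist
  rw [Finset.sum_congr rfl fun y _ => habs y]
  linarith

end MPaux

open MPaux in
/-- Morris–Peres: for an irreducible aperiodic lazy Markov chain on a
finite state space with stationary distribution `π`,
`τ(κ,x) ≤ 1 + ∫_{π_*}^{4/κ} 4/(r·Φ(r)²) dr`. -/
theorem mixing_time_le_conductance_profile_integral
    {S : Type*} [Fintype S] [DecidableEq S] [Nonempty S]
    (P : S → S → ℝ) (π : S → ℝ)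
    (hP0 : ∀ x y, 0 ≤ P x y) (hP1 : ∀ x, ∑ y : S, P x y = 1)
    (hlazy : ∀ x, 1 / 2 ≤ P x x)
    (hirr : ∀ x y, ∃ t, 0 < kernelPow P t x y)
    (hπpos : ∀ x, 0 < π x) (hπ1 : ∑ x : S, π x = 1)
    (hstat : ∀ y, ∑ x : S, π x * P x y = π y)
    (κ : ℝ) (hκ : κ ∈ Set.Ioo (0:ℝ) 1) (x : S) :
    (mixingTime P π κ x : ℝ)
      ≤ 1 + ∫ r in (⨅ y, π y)..(4 / κ), 4 / (r * (profile P π r) ^ 2) := by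
  classical
  obtain ⟨hκ0, hκ1⟩ := hκ
  set πs : ℝ := ⨅ y, π y with hπs
  obtain ⟨y₀, -, hy₀⟩ := Finset.exists_min_image Finset.univ π Finset.univ_nonempty
  have hbdd : BddBelow (Set.range π) := ⟨0, by rintro v ⟨y, rfl⟩; exact (hπpos y).le⟩
  have hπs_eq : πs = π y₀ :=
    le_antisymm (ciInf_le hbdd y₀) (le_ciInf fun y => hy₀ y (Finset.mem_univ y))
  have hπs_pos : 0 < πs := hπs_eq ▸ hπpos y₀
  have hπs_le : ∀ y, πs ≤ π y := fun y => hπs_eq ▸ hy₀ y (Finset.mem_univ y)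
  have hπs_le1 : πs ≤ 1 := by
    rw [hπs_eq, ← hπ1]
    exact Finset.single_le_sum (fun y _ => (hπpos y).le) (Finset.mem_univ y₀)
  have h4κ : (4:ℝ) ≤ 4/κ := by
    rw [le_div_iff₀ hκ0]; nlinarith
  have hπs4κ : πs ≤ 4/κ := by linarith
  have hhalf4κ : (1:ℝ)/2 ≤ 4/κ := by linarith
  have hint_nonneg : ∀ r : ℝ, 0 < r → 0 ≤ 4 / (r * profile P π r ^2) := fun r hr =>
    div_nonneg (by norm_num) (mul_nonneg hr.le (sq_nonneg _))
  have hI_nonneg : 0 ≤ ∫ r in πs..(4/κ), 4 / (r * profile P π r ^ 2) :=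
    intervalIntegral.integral_nonneg hπs4κ
      (fun r hr => hint_nonneg r (lt_of_lt_of_le hπs_pos hr.1))
  set G : ℕ → S → ℝ := fun t y => kernelPow P t x y / π y - 1 with hG
  set V : ℕ → ℝ := fun t => N2 π (G t) with hV
  have htv : ∀ t, tvDist (kernelPow P t x) π ≤ 1/2 * Real.sqrt (V t) := fun t =>
    tv_le π hπpos hπ1 _
  have hVnn : ∀ t, 0 ≤ V t := fun t => N2_nonneg π hπpos (G t)
  have hmix_of : ∀ t : ℕ, V t ≤ 4 * κ^2 → (mixingTime P π κ x : ℝ) ≤ (t:ℝ) := by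
    intro t ht
    have h1 : Real.sqrt (V t) ≤ 2*κ := by
      have h2 := Real.sqrt_le_sqrt ht
      rwa [show (4:ℝ)*κ^2 = (2*κ)^2 by ring, Real.sqrt_sq (by linarith)] at h2
    have h2 : tvDist (kernelPow P t x) π ≤ κ := le_trans (htv t) (by linarith)
    exact_mod_cast Nat.cast_le.2 (Nat.sInf_le h2)
  by_cases hc : V 0 ≤ 4*κ^2
  · have := hmix_of 0 hc
    push_cast at this
    linarith
  -- main case
  push_neg at hc
  have hκsq : 0 < 4*κ^2 := by positivity
  have hV0pos : 0 < V 0 := lt_trans hκsq hc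
  -- value of V 0
  have hersum : ∑ y ∈ Finset.univ.erase x, π y = 1 - π x := by
    have h := Finset.add_sum_erase Finset.univ π (Finset.mem_univ x)
    rw [hπ1] at h
    linarith
  have hV0eq : V 0 = (1 - π x) / π x := by
    have hterm : ∀ y ∈ Finset.univ.erase x, π y * (G 0 y)^2 = π y := by
      intro y hy
      have hxy : x ≠ y := fun hcc => (Finset.mem_erase.1 hy).1 hcc.symm
      have hk : kernelPow P 0 x y = 0 := by simp [kernelPow, hxy]
      have hy0 := (hπpos y).ne'
      simp only [hG, hk]
      rw [zero_div]
      ring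
    have hkx : kernelPow P 0 x x = 1 := by simp [kernelPow]
    have hsum : V 0 = π x * (G 0 x)^2 + ∑ y ∈ Finset.univ.erase x, π y * (G 0 y)^2 := by
      show N2 π (G 0) = _
      unfold N2
      rw [← Finset.add_sum_erase Finset.univ (fun y => π y * (G 0 y)^2) (Finset.mem_univ x)]
    rw [hsum, Finset.sum_congr rfl hterm, hersum]
    simp only [hG, hkx]
    have hx0 := (hπpos x).ne'
    field_simp
    ring
  have hπx1 : π x < 1 := by
    by_contra hx1
    push_neg at hx1
    rw [hV0eq] at hV0pos
    have := div_pos_iff.1 hV0pos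
    rcases this with ⟨h1, h2⟩ | ⟨h1, h2⟩
    · linarith
    · linarith [hπpos x]
  have hV0le : V 0 ≤ 1 / πs := by
    rw [hV0eq]
    exact div_le_div₀ (by norm_num) (by linarith [hπpos x]) hπs_pos (hπs_le x)
  have hπs_half : πs ≤ 1/2 := by
    have hne : (Finset.univ.erase x).Nonempty := by
      rw [Finset.nonempty_iff_ne_empty]
      intro he
      rw [he] at hersum
      simp at hersum
      linarith
    obtain ⟨z, hz⟩ := hne
    have hπz : π z ≤ 1 - π x := by
      rw [← hersum]
      exact Finset.single_le_sum (fun y _ => (hπpos y).le) hz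
    have h1 := hπs_le z
    have h2 := hπs_le x
    linarith
  -- candidate set witnesses
  have hCand : ∀ m : ℝ, πs ≤ m → (Cand P π (min m (1/2))).Nonempty := by
    intro m hm
    refine ⟨bottleneck P π {y₀}, {y₀}, Finset.singleton_nonempty y₀, ?_, rfl⟩
    have : pm π {y₀} = πs := by
      unfold pm
      rw [Finset.sum_singleton, hπs_eq]
    rw [this]
    exact le_min hm hπs_half
  -- dynamics
  have hmean : ∀ t, ∑ y : S, π y * G t y = 0 := by
    intro t
    have e : ∀ y : S, π y * G t y = kernelPow P t x y - π y := by
      intro y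
      have hy := (hπpos y).ne'
      simp only [hG]
      field_simp
    rw [Finset.sum_congr rfl fun y _ => e y, Finset.sum_sub_distrib,
      kernelPow_rowsum P hP1 t x, hπ1]
    ring
  have hdecay : ∀ t, V (t+1) ≤ V t - En P π (G t) := by
    intro t
    have hd := decay P π hP0 hP1 hlazy hπpos hstat (G t)
    have he : (fun y => (∑ z : S, π z * P z y * G t z) / π y) = G (t+1) := by
      funext y
      have hy := (hπpos y).ne'
      have e1 : ∀ z : S, π z * P z y * G t z = kernelPow P t x z * P z y - π z * P z y := by
        intro z
        have hz := (hπpos z).ne'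
        simp only [hG]
        field_simp
      rw [Finset.sum_congr rfl fun z _ => e1 z, Finset.sum_sub_distrib, hstat y]
      have e2 : ∑ z : S, kernelPow P t x z * P z y = kernelPow P (t+1) x y := by
        simp [kernelPow]
      rw [e2]
      simp only [hG]
      field_simp
    rw [he] at hd
    exact hd
  have hVadj : ∀ t, V (t+1) ≤ V t := fun t =>
    le_trans (hdecay t) (by linarith [En_nonneg P π hP0 hπpos (G t)])
  have hVle0 : ∀ t, V t ≤ V 0 := by
    intro t
    induction t with
    | zero => exact le_refl _
    | succ t ih => exact le_trans (hVadj t) ih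
  -- spectral gap quantities
  have hCandhalf : (Cand P π (min (1/2) (1/2) : ℝ)).Nonempty := hCand (1/2) hπs_half
  have hcm_mem : condMin P π ∈ Cand P π (1/2) := by
    rw [condMin_eq]
    refine Set.Nonempty.csInf_mem ?_ (Cand_finite P π _)
    obtain ⟨φ, hφ⟩ := hCandhalf
    exact ⟨φ, by rwa [min_self] at hφ⟩
  have hcm_pos : 0 < condMin P π := by
    obtain ⟨A, hA, hAm, hAe⟩ := hcm_mem
    rw [hAe]
    exact bottleneck_pos P π hP0 hπpos hπ1 hirr hA hAm
  have hcm_half : condMin P π ≤ 1/2 := by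
    obtain ⟨A, hA, hAm, hAe⟩ := hcm_mem
    rw [hAe]
    exact bottleneck_le_half P π hP0 hP1 hlazy hπpos hA
  set β : ℝ := condMin P π ^2 / 2 with hβ
  have hβpos : 0 < β := by positivity
  have hβ18 : β ≤ 1/8 := by rw [hβ]; nlinarith
  have hgapstep : ∀ t, V (t+1) ≤ (1 - β) * V t := by
    intro t
    have h1 := gap P π hP0 hP1 hπpos hπ1 hstat (G t) (hmean t)
    have h2 := hdecay t
    rw [hβ]
    have h3 : condMin P π ^2/2 * N2 π (G t) = β * V t := by rw [hβ, hV]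
    nlinarith [h1, h2]
  have hgeo0 : ∀ t : ℕ, V t ≤ (1-β)^t * V 0 := by
    intro t
    induction t with
    | zero => simp
    | succ t ih =>
        calc V (t+1) ≤ (1-β) * V t := hgapstep t
          _ ≤ (1-β) * ((1-β)^t * V 0) :=
              mul_le_mul_of_nonneg_left ih (by linarith)
          _ = (1-β)^(t+1) * V 0 := by ring
  have hex : ∃ t : ℕ, V t ≤ 4*κ^2 := by
    obtain ⟨n, hn⟩ := exists_pow_lt_of_lt_one (show (0:ℝ) < 4*κ^2/V 0 by positivity)
      (show 1-β < 1 by linarith)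
    refine ⟨n, ?_⟩
    have := (lt_div_iff₀ hV0pos).1 hn
    calc V n ≤ (1-β)^n * V 0 := hgeo0 n
      _ ≤ 4*κ^2 := by linarith
  set T : ℕ := Nat.find hex with hT
  have hTmem : V T ≤ 4*κ^2 := Nat.find_spec hex
  have hTmin : ∀ t < T, 4*κ^2 < V t := fun t ht => lt_of_not_ge (Nat.find_min hex ht)
  have hT1 : 1 ≤ T := by
    rcases Nat.eq_zero_or_pos T with h0 | h1
    · rw [h0] at hTmem
      exact absurd hTmem (not_le.2 hc)
    · exact h1
  have hmixT := hmix_of T hTmem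
  -- ======== counting ========
  have h200ex : ∃ n : ℕ, V (n+1) ≤ 200 := by
    refine ⟨T - 1, ?_⟩
    have : T - 1 + 1 = T := by omega
    rw [this]
    nlinarith [hTmem, hκ1, hκ0]
  set n₁ : ℕ := Nat.find h200ex with hn₁
  have hn₁V : V (n₁+1) ≤ 200 := Nat.find_spec h200ex
  have hp1 : ∀ t, t < n₁ → 200 < V (t+1) := fun t ht => lt_of_not_ge (Nat.find_min h200ex ht)
  -- ===== integrability of the integrand =====
  have hFanti : ∀ r1 r2 : ℝ, r1 ≤ r2 →
      profile P π (max r2 πs) ≤ profile P π (max r1 πs) := by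
    intro r1 r2 h12
    exact profile_anti P π hP0 hπpos (max_le_max h12 (le_refl πs))
      (hCand _ (le_max_right _ _))
  have hanti : Antitone (fun r : ℝ => profile P π (max r πs)) := fun r1 r2 h12 =>
    hFanti r1 r2 h12
  have hmeasF : Measurable (fun r : ℝ => profile P π (max r πs)) := hanti.measurable
  have hmeas : Measurable (fun r : ℝ => 4 / (r * profile P π (max r πs) ^ 2)) :=
    Measurable.div measurable_const (measurable_id.mul (hmeasF.pow_const 2))
  have hcmF : ∀ r : ℝ, r ≤ 4/κ → condMin P π ≤ profile P π (max r πs) := by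
    intro r hr
    have h1 : profile P π (max (4/κ) πs) = condMin P π := by
      rw [max_eq_left (by linarith)]
      exact profile_eq_condMin P π hhalf4κ
    rw [← h1]
    exact hFanti r (4/κ) hr
  have hbound : ∀ r ∈ Set.Ioc πs (4/κ),
      ‖4 / (r * profile P π (max r πs) ^ 2)‖ ≤ 4/(πs * condMin P π ^2) := by
    intro r hr
    obtain ⟨hr1, hr2⟩ := hr
    have hrpos : 0 < r := lt_trans hπs_pos hr1
    have hp := hcmF r hr2
    have hppos : 0 < profile P π (max r πs) := lt_of_lt_of_le hcm_pos hp
    rw [Real.norm_eq_abs,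
      abs_of_nonneg (div_nonneg (by norm_num) (mul_nonneg hrpos.le (sq_nonneg _)))]
    apply div_le_div_of_nonneg_left (by norm_num) (by positivity)
    have hsq : condMin P π ^2 ≤ profile P π (max r πs) ^2 :=
      pow_le_pow_left₀ hcm_pos.le hp 2
    calc πs * condMin P π ^2 ≤ r * condMin P π ^2 :=
          mul_le_mul_of_nonneg_right hr1.le (sq_nonneg _)
      _ ≤ r * profile P π (max r πs) ^2 := mul_le_mul_of_nonneg_left hsq hrpos.le
  have hIntOn : MeasureTheory.IntegrableOn
      (fun r : ℝ => 4 / (r * profile P π (max r πs) ^ 2)) (Set.Ioc πs (4/κ)) := by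
    apply MeasureTheory.Integrable.mono'
      (MeasureTheory.integrableOn_const (C := 4 / (πs * condMin P π ^ 2)) measure_Ioc_lt_top.ne)
      hmeas.aestronglyMeasurable
    exact (MeasureTheory.ae_restrict_iff' measurableSet_Ioc).2
      (Filter.Eventually.of_forall hbound)
  have hEqOn : Set.EqOn (fun r : ℝ => 4 / (r * profile P π (max r πs) ^ 2))
      (fun r : ℝ => 4 / (r * profile P π r ^ 2)) (Set.Ioc πs (4/κ)) := by
    intro r hr
    simp only
    rw [max_eq_left hr.1.le]
  have hInt : IntervalIntegrable (fun r : ℝ => 4 / (r * profile P π r ^ 2))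
      MeasureTheory.volume πs (4/κ) := by
    rw [intervalIntegrable_iff_integrableOn_Ioc_of_le hπs4κ]
    exact hIntOn.congr_fun hEqOn measurableSet_Ioc
  have hsubInt : ∀ c d : ℝ, πs ≤ c → c ≤ 4/κ → πs ≤ d → d ≤ 4/κ →
      IntervalIntegrable (fun r : ℝ => 4 / (r * profile P π r ^ 2))
        MeasureTheory.volume c d := by
    intro c d h1 h2 h3 h4
    apply hInt.mono_set
    apply Set.uIcc_subset_uIcc
    · rw [Set.uIcc_of_le hπs4κ]
      exact Set.mem_Icc.2 ⟨h1, h2⟩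
    · rw [Set.uIcc_of_le hπs4κ]
      exact Set.mem_Icc.2 ⟨h3, h4⟩
  -- lower bound for 100 / V t
  have hA_lb : ∀ t : ℕ, 0 < V t → πs ≤ 100 / V t := by
    intro t hVtpos
    rw [le_div_iff₀ hVtpos]
    have h1 : V 0 * πs ≤ 1 := by
      have h2 := (le_div_iff₀ hπs_pos).1 hV0le
      linarith
    have h2 : V t * πs ≤ V 0 * πs := mul_le_mul_of_nonneg_right (hVle0 t) hπs_pos.le
    calc πs * V t = V t * πs := by ring
      _ ≤ 1 := by linarith
      _ ≤ 100 := by norm_num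
  -- ===== phase 1 per-step integral bound =====
  have hstep : ∀ t : ℕ, t < n₁ →
      1 ≤ ∫ r in (100 / V t)..(100 / V (t+1)), 4 / (r * profile P π r ^ 2) := by
    intro t ht
    have hVt1 : 200 < V (t+1) := hp1 t ht
    have hVt : 200 < V t := lt_of_lt_of_le hVt1 (hVadj t)
    have hVtpos : 0 < V t := by linarith
    have hVt1pos : 0 < V (t+1) := by linarith
    have hAt_lb : πs ≤ 100 / V t := hA_lb t hVtpos
    have hmono : 100 / V t ≤ 100 / V (t+1) :=
      div_le_div_of_nonneg_left (by norm_num) hVt1pos (hVadj t)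
    have hub : 100 / V (t+1) ≤ 1/2 := by
      rw [div_le_iff₀ hVt1pos]
      linarith
    have hub' : 100 / V t ≤ 1/2 := le_trans hmono hub
    have hf0 : ∀ y : S, 0 ≤ kernelPow P t x y / π y := fun y =>
      div_nonneg (kernelPow_nonneg P hP0 t x y) (hπpos y).le
    have hf1 : ∑ y : S, π y * (kernelPow P t x y / π y) = 1 := by
      have e : ∀ y : S, π y * (kernelPow P t x y / π y) = kernelPow P t x y := by
        intro y
        have hy := (hπpos y).ne'
        field_simp
      rw [Finset.sum_congr rfl fun y _ => e y]
      exact kernelPow_rowsum P hP1 t x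
    have h200' : (200:ℝ) ≤ N2 π (fun y => kernelPow P t x y / π y - 1) := le_of_lt hVt
    have hph : profile P π (100 / N2 π (fun y => kernelPow P t x y / π y - 1)) ^ 2 / 4
        * N2 π (fun y => kernelPow P t x y / π y - 1)
        ≤ En P π (fun y => kernelPow P t x y / π y - 1) :=
      phase1 P π hP0 hP1 hπpos hπ1 hstat (fun y => kernelPow P t x y / π y) hf0 hf1 h200'
    have hstepV : V (t+1) ≤ V t - profile P π (100 / V t)^2/4 * V t := by
      have hVdef : N2 π (fun y => kernelPow P t x y / π y - 1) = V t := rfl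
      have hEn_eq : En P π (fun y => kernelPow P t x y / π y - 1) = En P π (G t) := rfl
      rw [hVdef, hEn_eq] at hph
      have hdec := hdecay t
      linarith
    set Φt := profile P π (100 / V t) with hΦt
    have hΦpos : 0 < Φt := profile_pos P π hP0 hπpos hπ1 hirr (hCand _ hAt_lb)
    have hpt : ∀ r ∈ Set.Icc (100 / V t) (100 / V (t+1)),
        4/Φt^2 * r⁻¹ ≤ 4 / (r * profile P π r ^ 2) := by
      intro r hr
      obtain ⟨hr1, hr2⟩ := hr
      have hrpos : 0 < r := lt_of_lt_of_le (lt_of_lt_of_le hπs_pos hAt_lb) hr1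
      have hrπs : πs ≤ r := le_trans hAt_lb hr1
      have hppos : 0 < profile P π r :=
        profile_pos P π hP0 hπpos hπ1 hirr (hCand _ hrπs)
      have hple : profile P π r ≤ Φt :=
        profile_anti P π hP0 hπpos hr1 (hCand _ hAt_lb)
      have h1 : 4 / (r * Φt ^ 2) ≤ 4 / (r * profile P π r ^ 2) := by
        apply div_le_div_of_nonneg_left (by norm_num) (by positivity)
        have h2 : profile P π r ^2 ≤ Φt ^2 := pow_le_pow_left₀ hppos.le hple 2
        exact mul_le_mul_of_nonneg_left h2 hrpos.le
      calc 4/Φt^2 * r⁻¹ = 4 / (r * Φt^2) := by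
            rw [eq_comm, mul_comm r (Φt^2), ← div_div, div_eq_mul_inv (4/Φt^2) r]
        _ ≤ _ := h1
    have h0uIcc : (0:ℝ) ∉ Set.uIcc (100 / V t) (100 / V (t+1)) := by
      rw [Set.uIcc_of_le hmono]
      intro hmem
      have h1 := (Set.mem_Icc.1 hmem).1
      have h2 : (0:ℝ) < 100 / V t := by positivity
      linarith
    have hIntInv : IntervalIntegrable (fun r : ℝ => 4/Φt^2 * r⁻¹)
        MeasureTheory.volume (100 / V t) (100 / V (t+1)) := by
      apply IntervalIntegrable.const_mul
      exact intervalIntegral.intervalIntegrable_inv (fun r hr => by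
        intro h0
        rw [h0] at hr
        exact h0uIcc hr) continuousOn_id
    have hIntSub : IntervalIntegrable (fun r : ℝ => 4 / (r * profile P π r ^ 2))
        MeasureTheory.volume (100 / V t) (100 / V (t+1)) :=
      hsubInt (100 / V t) (100 / V (t+1)) hAt_lb (le_trans hub' hhalf4κ)
        (le_trans hAt_lb hmono) (le_trans hub hhalf4κ)
    have hcompare := intervalIntegral.integral_mono_on hmono hIntInv hIntSub hpt
    have hlog : ∫ r in (100 / V t)..(100 / V (t+1)), 4/Φt^2 * r⁻¹
        = 4/Φt^2 * Real.log ((100 / V (t+1)) / (100 / V t)) := by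
      rw [intervalIntegral.integral_const_mul, integral_inv h0uIcc]
    have hratio : (100 / V (t+1)) / (100 / V t) = V t / V (t+1) := by
      field_simp
    have hlog2 : 1 ≤ 4/Φt^2 * Real.log (V t / V (t+1)) := by
      have hl1 : Real.log (V (t+1) / V t) ≤ V (t+1)/V t - 1 :=
        Real.log_le_sub_one_of_pos (by positivity)
      have hl2 : Real.log (V t / V (t+1)) = - Real.log (V (t+1) / V t) := by
        rw [← Real.log_inv]
        congr 1
        field_simp
      have hl3 : Φt^2/4 ≤ 1 - V (t+1)/V t := by
        have h4 : Φt^2/4 * V t ≤ V t - V (t+1) := by linarith [hstepV]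
        rw [show (1:ℝ) - V (t+1)/V t = (V t - V (t+1))/V t by field_simp,
          le_div_iff₀ hVtpos]
        linarith
      have hl4 : Φt^2/4 ≤ Real.log (V t / V (t+1)) := by
        rw [hl2]
        linarith
      have h5 : 4/Φt^2 * (Φt^2/4) ≤ 4/Φt^2 * Real.log (V t / V (t+1)) :=
        mul_le_mul_of_nonneg_left hl4 (by positivity)
      have h6 : 4/Φt^2 * (Φt^2/4) = 1 := by field_simp
      linarith
    rw [hlog, hratio] at hcompare
    linarith
  -- ===== cumulative phase-1 bound =====
  have hC1 : ∀ t : ℕ, t ≤ n₁ →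
      (t:ℝ) ≤ ∫ r in (100 / V 0)..(100 / V t), 4 / (r * profile P π r ^2) := by
    intro t
    induction t with
    | zero =>
        intro _
        rw [intervalIntegral.integral_same]
        simp
    | succ t ih =>
        intro hle
        have ht : t < n₁ := lt_of_lt_of_le (Nat.lt_succ_self t) hle
        have h1 := ih (le_of_lt ht)
        have h2 := hstep t ht
        have hVt1 : 200 < V (t+1) := hp1 t ht
        have hVt : 200 < V t := lt_of_lt_of_le hVt1 (hVadj t)
        have hV0gt : 200 < V 0 := lt_of_lt_of_le hVt (hVle0 t)
        have hb1 : πs ≤ 100 / V 0 := hA_lb 0 hV0pos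
        have hb2 : 100 / V 0 ≤ 1/2 := by
          rw [div_le_iff₀ hV0pos]; linarith
        have hb3 : πs ≤ 100 / V t := hA_lb t (by linarith)
        have hb4 : 100 / V t ≤ 1/2 := by
          rw [div_le_iff₀ (by linarith : (0:ℝ) < V t)]; linarith
        have hb5 : πs ≤ 100 / V (t+1) := hA_lb (t+1) (by linarith)
        have hb6 : 100 / V (t+1) ≤ 1/2 := by
          rw [div_le_iff₀ (by linarith : (0:ℝ) < V (t+1))]; linarith
        have hadd := intervalIntegral.integral_add_adjacent_intervals
          (hsubInt (100 / V 0) (100 / V t) hb1 (by linarith) hb3 (by linarith))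
          (hsubInt (100 / V t) (100 / V (t+1)) hb3 (by linarith) hb5 (by linarith))
        push_cast
        rw [← hadd]
        linarith
  -- ===== phase-1 total ≤ left piece =====
  have hC2 : (n₁:ℝ) ≤ ∫ r in πs..(1/2:ℝ), 4 / (r * profile P π r ^2) := by
    rcases Nat.eq_zero_or_pos n₁ with h0 | hposn
    · rw [h0]
      push_cast
      exact intervalIntegral.integral_nonneg hπs_half
        (fun r hr => hint_nonneg r (lt_of_lt_of_le hπs_pos hr.1))
    · have hVn₁ : 200 < V n₁ := by
        have h1 := hp1 (n₁ - 1) (by omega)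
        have he : n₁ - 1 + 1 = n₁ := by omega
        rwa [he] at h1
      have hV0gt : 200 < V 0 := lt_of_lt_of_le hVn₁ (hVle0 n₁)
      have hVn₁pos : 0 < V n₁ := by linarith
      have hub0 : 100 / V 0 ≤ 1/2 := by
        rw [div_le_iff₀ hV0pos]; linarith
      have hubn : 100 / V n₁ ≤ 1/2 := by
        rw [div_le_iff₀ hVn₁pos]; linarith
      have hlb0 : πs ≤ 100 / V 0 := hA_lb 0 hV0pos
      have hlbn : πs ≤ 100 / V n₁ := hA_lb n₁ hVn₁pos
      have hmono0n : 100 / V 0 ≤ 100 / V n₁ :=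
        div_le_div_of_nonneg_left (by norm_num) hVn₁pos (hVle0 n₁)
      have hmain := hC1 n₁ (le_refl n₁)
      have hadd1 := intervalIntegral.integral_add_adjacent_intervals
        (hsubInt πs (100 / V 0) (le_refl πs) hπs4κ hlb0 (by linarith))
        (hsubInt (100 / V 0) (100 / V n₁) hlb0 (by linarith) hlbn (by linarith))
      have hadd2 := intervalIntegral.integral_add_adjacent_intervals
        (hsubInt πs (100 / V n₁) (le_refl πs) hπs4κ hlbn (by linarith))
        (hsubInt (100 / V n₁) (1/2) hlbn (by linarith) hπs_half hhalf4κ)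
      have hpos1 : 0 ≤ ∫ r in πs..(100 / V 0), 4 / (r * profile P π r ^2) :=
        intervalIntegral.integral_nonneg hlb0
          (fun r hr => hint_nonneg r (lt_of_lt_of_le hπs_pos hr.1))
      have hpos2 : 0 ≤ ∫ r in (100 / V n₁)..(1/2:ℝ), 4 / (r * profile P π r ^2) :=
        intervalIntegral.integral_nonneg hubn
          (fun r hr => hint_nonneg r (lt_of_lt_of_le (lt_of_lt_of_le hπs_pos hlbn) hr.1))
      linarith
  -- ===== phase-2 counting =====
  have hC3 : (T:ℝ) ≤ (n₁:ℝ) + 2 + Real.log (50 / κ^2) / β := by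
    have hlog50 : 0 ≤ Real.log (50/κ^2) := by
      apply Real.log_nonneg
      rw [le_div_iff₀ (by positivity)]
      nlinarith
    rcases le_or_gt T (n₁+1) with hTle | hTgt
    · have h1 : (T:ℝ) ≤ (n₁:ℝ) + 1 := by exact_mod_cast hTle
      have h2 := div_nonneg hlog50 hβpos.le
      linarith
    · set k : ℕ := T - n₁ - 2 with hkdef
      have hk : n₁ + 1 + k = T - 1 := by omega
      have hgeo : ∀ j : ℕ, V (n₁ + 1 + j) ≤ (1-β)^j * 200 := by
        intro j
        induction j with
        | zero => simpa using hn₁V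
        | succ j ihj =>
            have he : n₁ + 1 + (j+1) = (n₁ + 1 + j) + 1 := by omega
            rw [he]
            calc V ((n₁+1+j)+1) ≤ (1-β) * V (n₁+1+j) := hgapstep _
              _ ≤ (1-β) * ((1-β)^j * 200) :=
                  mul_le_mul_of_nonneg_left ihj (by linarith)
              _ = (1-β)^(j+1) * 200 := by ring
      have hVT1 : 4*κ^2 < V (T-1) := hTmin (T-1) (by omega)
      have h1 : 4*κ^2 < (1-β)^k * 200 := by
        have h2 := hgeo k
        rw [hk] at h2
        linarith
      have hβpos1 : 0 < 1 - β := by linarith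
      have h2 : κ^2/50 < (1-β)^k := by linarith [h1]
      have h3 : Real.log (κ^2/50) < Real.log ((1-β)^k) :=
        Real.log_lt_log (by positivity) h2
      have h4 : Real.log ((1-β)^k) = k * Real.log (1-β) := by
        rw [Real.log_pow]
      have h5 : Real.log (1-β) ≤ -β := by
        have h6 := Real.log_le_sub_one_of_pos hβpos1
        linarith
      have h6 : Real.log (κ^2/50) = - Real.log (50/κ^2) := by
        rw [← Real.log_inv]
        congr 1
        rw [inv_div]
      have h7 : (k:ℝ) * β < Real.log (50/κ^2) := by
        have hkβ : (k:ℝ) * Real.log (1-β) ≤ (k:ℝ) * (-β) :=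
          mul_le_mul_of_nonneg_left h5 (Nat.cast_nonneg k)
        rw [h6, h4] at h3
        linarith [h3, hkβ]
      have h8 : (k:ℝ) < Real.log (50/κ^2) / β := by
        rw [lt_div_iff₀ hβpos]
        linarith
      have hTk : (T:ℝ) = (n₁:ℝ) + 2 + (k:ℝ) := by
        have he : T = n₁ + 2 + k := by omega
        rw [he]
        push_cast
        ring
      linarith
  -- ===== value of right piece =====
  have hright : ∫ r in (1/2:ℝ)..(4/κ), 4 / (r * profile P π r ^2)
      = 4 / condMin P π ^2 * Real.log (8/κ) := by
    have hcongr : Set.EqOn (fun r : ℝ => 4 / (r * profile P π r ^2))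
        (fun r : ℝ => 4 / condMin P π ^2 * r⁻¹) (Set.uIcc (1/2:ℝ) (4/κ)) := by
      intro r hr
      rw [Set.uIcc_of_le hhalf4κ] at hr
      obtain ⟨hr1, hr2⟩ := hr
      simp only
      rw [profile_eq_condMin P π hr1, mul_comm r _, ← div_div, div_eq_mul_inv]
    have h0uIcc : (0:ℝ) ∉ Set.uIcc (1/2:ℝ) (4/κ) := by
      rw [Set.uIcc_of_le hhalf4κ]
      intro hmem
      have h1 := (Set.mem_Icc.1 hmem).1
      linarith
    rw [intervalIntegral.integral_congr hcongr, intervalIntegral.integral_const_mul,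
      integral_inv h0uIcc]
    congr 1
    rw [show (4/κ)/((1:ℝ)/2) = 8/κ by
      rw [div_div_eq_mul_div, div_mul_eq_mul_div, mul_comm]
      norm_num]
  -- ===== final numeric inequality =====
  have hlog_le : β + Real.log (50/κ^2) ≤ 2 * Real.log (8/κ) := by
    have e1 : Real.log (50/κ^2) = Real.log 50 - 2 * Real.log κ := by
      rw [Real.log_div (by norm_num) (by positivity), Real.log_pow]
      push_cast
      ring
    have e2 : Real.log (8/κ) = Real.log 8 - Real.log κ :=
      Real.log_div (by norm_num) hκ0.ne'
    have e3 : Real.log 64 = 2 * Real.log 8 := by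
      rw [show (64:ℝ) = 8^2 by norm_num, Real.log_pow]
      push_cast
      ring
    have e4 : (1:ℝ)/8 ≤ Real.log 64 - Real.log 50 := by
      have h1 : Real.log 64 - Real.log 50 = Real.log ((64:ℝ)/50) :=
        (Real.log_div (by norm_num) (by norm_num)).symm
      rw [h1, show (64:ℝ)/50 = 32/25 by norm_num,
        Real.le_log_iff_exp_le (by norm_num)]
      have h2 : Real.exp (1/8 : ℝ) ≤ 8/7 := by
        have h3 := Real.add_one_le_exp (-(1/8:ℝ))
        rw [Real.exp_neg] at h3
        have h5 : (0:ℝ) < Real.exp (1/8:ℝ) := Real.exp_pos _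
        have h7 : (7:ℝ)/8 ≤ (Real.exp (1/8:ℝ))⁻¹ := by linarith
        have h8 : (7:ℝ)/8 * Real.exp (1/8:ℝ) ≤ 1 := by
          have := mul_le_mul_of_nonneg_right h7 h5.le
          rwa [inv_mul_cancel₀ h5.ne'] at this
        linarith
      linarith
    rw [e1, e2]
    linarith [hβ18, e4, e3.symm.le, e3.le]
  have hβfinal : 2 + Real.log (50/κ^2) / β ≤ 1 + 4 / condMin P π ^2 * Real.log (8/κ) := by
    have hc2β : 4 / condMin P π ^2 = 2 / β := by
      rw [hβ]
      field_simp
      ring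
    rw [hc2β]
    have h1 : Real.log (50/κ^2) / β ≤ (2 * Real.log (8/κ) - β)/β :=
      (div_le_div_iff_of_pos_right hβpos).2 (by linarith [hlog_le])
    have h2 : (2 * Real.log (8/κ) - β)/β = 2/β * Real.log (8/κ) - 1 := by
      rw [sub_div, div_self hβpos.ne']
      ring
    rw [h2] at h1
    linarith
  -- ===== put everything together =====
  have hsplitI : ∫ r in πs..(4/κ), 4 / (r * profile P π r ^2)
      = (∫ r in πs..(1/2:ℝ), 4 / (r * profile P π r ^2))
        + ∫ r in (1/2:ℝ)..(4/κ), 4 / (r * profile P π r ^2) :=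
    (intervalIntegral.integral_add_adjacent_intervals
      (hsubInt πs (1/2) (le_refl πs) hπs4κ hπs_half hhalf4κ)
      (hsubInt (1/2) (4/κ) hπs_half hhalf4κ hπs4κ (le_refl _))).symm
  have hfinal : (T:ℝ) ≤ 1 + ∫ r in πs..(4/κ), 4 / (r * profile P π r ^2) := by
    rw [hsplitI, hright]
    linarith [hC2, hC3, hβfinal]
  linarith [hmixT, hfinal]
end

section
/- There is a constant C(m) > 0, depending only on m, such that for every vector k = (k_{11}, k_{12}, k_{21}, k_{22}) with 0 ≤ k_{11} ≤ 3m/10, 0 ≤ k_{12} ≤ 7m/10, 0 ≤ k_{21} ≤ 3m/5, 0 ≤ k_{22} ≤ 2m/5: Σ_{z : k(z) = k} W(z) = C(m) · binom(2m, k_{..})·binom(3m/10, k_{11})·binom(7m/10, k_{12})·binom(3m/5, k_{21})·binom(2m/5, k_{22}) / [(k_{..}+1)(2m−k_{..}+1)·binom(m, k_{1.})·binom(m, k_{2.})·binom(9m/10, k_{.1})·binom(11m/10, k_{.2})]. In particular, the stationary distribution π_L of the lumped Gibbs sampler is proportional to this expression. -/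
open Finset

/-! Corpus with two documents of `m` tokens each over the two-word vocabulary `{1,2}`:
tokens are indexed by `Fin (2*m)`, document 1 being tokens `0,…,m−1` and document 2
tokens `m,…,2m−1`; the first `3m/10` tokens of document 1 and the first `6m/10` tokens
of document 2 are occurrences of word 1 (so `n_{.1} = 9m/10`, `n_{.2} = 11m/10`).
A topic assignment is `z : Fin (2*m) → Bool`, `true` meaning topic `A`. -/

/-- `k₁₁(z)`: tokens of word 1 in document 1 with topic `A`. -/
def k11 (m : ℕ) (z : Fin (2 * m) → Bool) : ℕ :=
  (univ.filter fun i : Fin (2 * m) => i.val < 3 * m / 10 ∧ z i = true).card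

/-- `k₁₂(z)`: tokens of word 2 in document 1 with topic `A`. -/
def k12 (m : ℕ) (z : Fin (2 * m) → Bool) : ℕ :=
  (univ.filter fun i : Fin (2 * m) => 3 * m / 10 ≤ i.val ∧ i.val < m ∧ z i = true).card

/-- `k₂₁(z)`: tokens of word 1 in document 2 with topic `A`. -/
def k21 (m : ℕ) (z : Fin (2 * m) → Bool) : ℕ :=
  (univ.filter fun i : Fin (2 * m) => m ≤ i.val ∧ i.val < m + 6 * m / 10 ∧ z i = true).card

/-- `k₂₂(z)`: tokens of word 2 in document 2 with topic `A`. -/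
def k22 (m : ℕ) (z : Fin (2 * m) → Bool) : ℕ :=
  (univ.filter fun i : Fin (2 * m) => m + 6 * m / 10 ≤ i.val ∧ z i = true).card

/-- `k₁.(z) = k₁₁ + k₁₂`. -/
def k1d (m : ℕ) (z : Fin (2 * m) → Bool) : ℕ := k11 m z + k12 m z
/-- `k₂.(z) = k₂₁ + k₂₂`. -/
def k2d (m : ℕ) (z : Fin (2 * m) → Bool) : ℕ := k21 m z + k22 m z
/-- `k_{.1}(z) = k₁₁ + k₂₁`. -/
def kw1 (m : ℕ) (z : Fin (2 * m) → Bool) : ℕ := k11 m z + k21 m z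
/-- `k_{.2}(z) = k₁₂ + k₂₂`. -/
def kw2 (m : ℕ) (z : Fin (2 * m) → Bool) : ℕ := k12 m z + k22 m z
/-- `k_{..}(z)`: total number of tokens with topic `A`. -/
def kdd (m : ℕ) (z : Fin (2 * m) → Bool) : ℕ := k1d m z + k2d m z

/-- The LDA joint weight `W(z)` of the topic assignment `z` together with the observed
words, under uniform priors on `θ₁, θ₂, φ_A, φ_B`. -/
noncomputable def W (m : ℕ) (z : Fin (2 * m) → Bool) : ℝ :=
  (∫ θ in (0:ℝ)..1, θ ^ k1d m z * (1 - θ) ^ (m - k1d m z))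
    * (∫ θ in (0:ℝ)..1, θ ^ k2d m z * (1 - θ) ^ (m - k2d m z))
    * (∫ φ in (0:ℝ)..1, φ ^ kw1 m z * (1 - φ) ^ (kdd m z - kw1 m z))
    * (∫ φ in (0:ℝ)..1,
        φ ^ (9 * m / 10 - kw1 m z) * (1 - φ) ^ ((2 * m - kdd m z) - (9 * m / 10 - kw1 m z)))

/-- The explicit posterior expression from Proposition `piR`. -/
noncomputable def postExpr (m : ℕ) (z : Fin (2 * m) → Bool) : ℝ :=
  ((2 * m).choose (kdd m z) : ℝ) /
    (((kdd m z : ℝ) + 1) * ((2 * m : ℝ) - (kdd m z : ℝ) + 1)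
      * (m.choose (k1d m z) : ℝ) * (m.choose (k2d m z) : ℝ)
      * ((9 * m / 10).choose (kw1 m z) : ℝ) * ((11 * m / 10).choose (kw2 m z) : ℝ))

lemma beta_nat (a b : ℕ) : (∫ x in (0:ℝ)..1, x ^ a * (1 - x) ^ b)
    = (a.factorial : ℝ) * b.factorial / (a + b + 1).factorial := by
  induction b generalizing a with
  | zero =>
      simp only [pow_zero, mul_one, integral_pow]
      have h : ((a + 0 + 1).factorial : ℝ) = (a + 1) * a.factorial := by
        rw [show a + 0 + 1 = a + 1 by ring]
        exact_mod_cast Nat.factorial_succ a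
      rw [h, Nat.factorial_zero]
      have h1 : (a.factorial : ℝ) ≠ 0 := by exact_mod_cast Nat.factorial_ne_zero a
      have h2 : ((a : ℝ) + 1) ≠ 0 := by positivity
      push_cast
      field_simp
      simp
  | succ b ih =>
      have expand : ∀ x ∈ Set.uIcc (0:ℝ) 1, x ^ a * (1 - x) ^ (b + 1)
          = (fun x : ℝ => x ^ a * (1 - x) ^ b - x ^ (a + 1) * (1 - x) ^ b) x := by
        intro x _; simp only; ring
      rw [intervalIntegral.integral_congr expand,
        intervalIntegral.integral_sub
          ((Continuous.intervalIntegrable (by continuity) 0 1))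
          ((Continuous.intervalIntegrable (by continuity) 0 1)),
        ih a, ih (a + 1)]
      rw [show a + 1 + b + 1 = a + b + 2 by ring, show a + (b + 1) + 1 = a + b + 2 by ring]
      have hf2 : ((a + b + 2).factorial : ℝ) = (a + b + 2) * (a + b + 1).factorial := by
        rw [show a + b + 2 = (a + b + 1) + 1 by ring]
        exact_mod_cast Nat.factorial_succ (a + b + 1)
      have hf1 : ((a + 1).factorial : ℝ) = (a + 1) * a.factorial := by
        exact_mod_cast Nat.factorial_succ a
      have hfb : ((b + 1).factorial : ℝ) = (b + 1) * b.factorial := by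
        exact_mod_cast Nat.factorial_succ b
      rw [hf2, hf1, hfb]
      have h1 : (a.factorial : ℝ) ≠ 0 := by exact_mod_cast Nat.factorial_ne_zero a
      have h2 : (b.factorial : ℝ) ≠ 0 := by exact_mod_cast Nat.factorial_ne_zero b
      have h3 : ((a + b + 1).factorial : ℝ) ≠ 0 := by
        exact_mod_cast Nat.factorial_ne_zero (a + b + 1)
      have h4 : ((a : ℝ) + b + 2) ≠ 0 := by positivity
      push_cast
      field_simp
      ring


lemma card_class (t : ℕ) (a b c d : ℕ) :
    ((univ : Finset (Fin (2 * (10 * t)) → Bool)).filter (fun z =>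
        k11 (10 * t) z = a ∧ k12 (10 * t) z = b ∧
        k21 (10 * t) z = c ∧ k22 (10 * t) z = d)).card
      = (3 * t).choose a * ((7 * t).choose b * ((6 * t).choose c * (4 * t).choose d)) := by
  set m : ℕ := 10 * t with hmdef
  have hp : 3 * m / 10 = 3 * t := by omega
  have hq6 : 6 * m / 10 = 6 * t := by omega
  set n : ℕ := 2 * m with hndef
  have hlt1 : ∀ x ∈ Finset.range (3 * t), x < n := by intro x hx; simp at hx; omega
  have hlt2 : ∀ x ∈ Finset.Ico (3 * t) m, x < n := by intro x hx; simp at hx; omega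
  have hlt3 : ∀ x ∈ Finset.Ico m (m + 6 * t), x < n := by intro x hx; simp at hx; omega
  have hlt4 : ∀ x ∈ Finset.Ico (m + 6 * t) n, x < n := by intro x hx; simp at hx; omega
  set A1 : Finset (Fin n) := (Finset.range (3 * t)).attachFin hlt1 with hA1
  set A2 : Finset (Fin n) := (Finset.Ico (3 * t) m).attachFin hlt2 with hA2
  set A3 : Finset (Fin n) := (Finset.Ico m (m + 6 * t)).attachFin hlt3 with hA3
  set A4 : Finset (Fin n) := (Finset.Ico (m + 6 * t) n).attachFin hlt4 with hA4
  have mA1 : ∀ i : Fin n, i ∈ A1 ↔ i.val < 3 * t := by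
    intro i; simp [hA1, Finset.mem_attachFin]
  have mA2 : ∀ i : Fin n, i ∈ A2 ↔ 3 * t ≤ i.val ∧ i.val < m := by
    intro i; simp [hA2, Finset.mem_attachFin]
  have mA3 : ∀ i : Fin n, i ∈ A3 ↔ m ≤ i.val ∧ i.val < m + 6 * t := by
    intro i; simp [hA3, Finset.mem_attachFin]
  have mA4 : ∀ i : Fin n, i ∈ A4 ↔ m + 6 * t ≤ i.val := by
    intro i
    simp only [hA4, Finset.mem_attachFin, Finset.mem_Ico]
    exact ⟨fun h => h.1, fun h => ⟨h, i.isLt⟩⟩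
  set T := (A1.powersetCard a ×ˢ A2.powersetCard b) ×ˢ (A3.powersetCard c ×ˢ A4.powersetCard d)
    with hT
  have key : ∀ S1 S2 S3 S4 : Finset (Fin n), S1 ⊆ A1 → S2 ⊆ A2 → S3 ⊆ A3 → S4 ⊆ A4 →
      (univ.filter fun i : Fin n => i.val < 3 * t ∧
          (decide (i ∈ S1 ∪ S2 ∪ S3 ∪ S4) = true)) = S1 ∧
      (univ.filter fun i : Fin n => 3 * t ≤ i.val ∧ i.val < m ∧
          (decide (i ∈ S1 ∪ S2 ∪ S3 ∪ S4) = true)) = S2 ∧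
      (univ.filter fun i : Fin n => m ≤ i.val ∧ i.val < m + 6 * t ∧
          (decide (i ∈ S1 ∪ S2 ∪ S3 ∪ S4) = true)) = S3 ∧
      (univ.filter fun i : Fin n => m + 6 * t ≤ i.val ∧
          (decide (i ∈ S1 ∪ S2 ∪ S3 ∪ S4) = true)) = S4 := by
    intro S1 S2 S3 S4 h1 h2 h3 h4
    have r1 : ∀ i ∈ S1, i.val < 3 * t := fun i hi => (mA1 i).1 (h1 hi)
    have r2 : ∀ i ∈ S2, 3 * t ≤ i.val ∧ i.val < m := fun i hi => (mA2 i).1 (h2 hi)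
    have r3 : ∀ i ∈ S3, m ≤ i.val ∧ i.val < m + 6 * t := fun i hi => (mA3 i).1 (h3 hi)
    have r4 : ∀ i ∈ S4, m + 6 * t ≤ i.val := fun i hi => (mA4 i).1 (h4 hi)
    refine ⟨?_, ?_, ?_, ?_⟩
    · ext i
      simp only [Finset.mem_filter, Finset.mem_univ, true_and, decide_eq_true_eq,
        Finset.mem_union]
      constructor
      · rintro ⟨hr, ((hi | hi) | hi) | hi⟩
        · exact hi
        · exfalso; have := r2 i hi; omega
        · exfalso; have := r3 i hi; omega
        · exfalso; have := r4 i hi; omega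
      · intro hi; exact ⟨r1 i hi, Or.inl (Or.inl (Or.inl hi))⟩
    · ext i
      simp only [Finset.mem_filter, Finset.mem_univ, true_and, decide_eq_true_eq,
        Finset.mem_union]
      constructor
      · rintro ⟨hr, hr', ((hi | hi) | hi) | hi⟩
        · exfalso; have := r1 i hi; omega
        · exact hi
        · exfalso; have := r3 i hi; omega
        · exfalso; have := r4 i hi; omega
      · intro hi; exact ⟨(r2 i hi).1, (r2 i hi).2, Or.inl (Or.inl (Or.inr hi))⟩
    · ext i
      simp only [Finset.mem_filter, Finset.mem_univ, true_and, decide_eq_true_eq,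
        Finset.mem_union]
      constructor
      · rintro ⟨hr, hr', ((hi | hi) | hi) | hi⟩
        · exfalso; have := r1 i hi; omega
        · exfalso; have := r2 i hi; omega
        · exact hi
        · exfalso; have := r4 i hi; omega
      · intro hi; exact ⟨(r3 i hi).1, (r3 i hi).2, Or.inl (Or.inr hi)⟩
    · ext i
      simp only [Finset.mem_filter, Finset.mem_univ, true_and, decide_eq_true_eq,
        Finset.mem_union]
      constructor
      · rintro ⟨hr, ((hi | hi) | hi) | hi⟩
        · exfalso; have := r1 i hi; omega
        · exfalso; have := r2 i hi; omega
        · exfalso; have := r3 i hi; omega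
        · exact hi
      · intro hi; exact ⟨r4 i hi, Or.inr hi⟩
  have hcard : ((univ : Finset (Fin n → Bool)).filter (fun z =>
        k11 m z = a ∧ k12 m z = b ∧ k21 m z = c ∧ k22 m z = d)).card = T.card := by
    apply Finset.card_nbij'
      (i := fun z => ((univ.filter fun i : Fin n => i.val < 3 * t ∧ z i = true,
                       univ.filter fun i : Fin n => 3 * t ≤ i.val ∧ i.val < m ∧ z i = true),
                      (univ.filter fun i : Fin n => m ≤ i.val ∧ i.val < m + 6 * t ∧ z i = true,
                       univ.filter fun i : Fin n => m + 6 * t ≤ i.val ∧ z i = true)))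
      (j := fun p => fun i => decide (i ∈ p.1.1 ∪ p.1.2 ∪ p.2.1 ∪ p.2.2))
    · intro z hz
      simp only [Finset.mem_coe, Finset.mem_filter, Finset.mem_univ, true_and, k11, k12, k21, k22,
        hp, hq6] at hz
      obtain ⟨h11, h12, h21, h22⟩ := hz
      simp only [Finset.mem_coe, hT, Finset.mem_product, Finset.mem_powersetCard]
      refine ⟨⟨⟨?_, h11⟩, ?_, h12⟩, ⟨?_, h21⟩, ?_, h22⟩
      · intro i hi; simp only [Finset.mem_filter] at hi; exact (mA1 i).2 hi.2.1
      · intro i hi; simp only [Finset.mem_filter] at hi; exact (mA2 i).2 ⟨hi.2.1, hi.2.2.1⟩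
      · intro i hi; simp only [Finset.mem_filter] at hi; exact (mA3 i).2 ⟨hi.2.1, hi.2.2.1⟩
      · intro i hi; simp only [Finset.mem_filter] at hi; exact (mA4 i).2 hi.2.1
    · rintro ⟨⟨S1, S2⟩, ⟨S3, S4⟩⟩ hS
      simp only [Finset.mem_coe, hT, Finset.mem_product, Finset.mem_powersetCard] at hS
      obtain ⟨⟨⟨hs1, hc1⟩, hs2, hc2⟩, ⟨hs3, hc3⟩, hs4, hc4⟩ := hS
      obtain ⟨e1, e2, e3, e4⟩ := key S1 S2 S3 S4 hs1 hs2 hs3 hs4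
      simp only [Finset.mem_coe, Finset.mem_filter, Finset.mem_univ, true_and, k11, k12, k21, k22, hp, hq6]
      exact ⟨by rw [e1]; exact hc1, by rw [e2]; exact hc2,
        by rw [e3]; exact hc3, by rw [e4]; exact hc4⟩
    · intro z hz
      funext i
      by_cases hzi : z i = true
      · rw [hzi]
        simp only [decide_eq_true_eq, Finset.mem_union, Finset.mem_filter, Finset.mem_univ,
          true_and, hzi, and_true]
        have hin : (i : ℕ) < n := i.isLt
        omega
      · have hf : z i = false := by simpa using hzi
        rw [hf]
        simp [Finset.mem_union, Finset.mem_filter, hf]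
    · rintro ⟨⟨S1, S2⟩, ⟨S3, S4⟩⟩ hS
      simp only [Finset.mem_coe, hT, Finset.mem_product, Finset.mem_powersetCard] at hS
      obtain ⟨⟨⟨hs1, _⟩, hs2, _⟩, ⟨hs3, _⟩, hs4, _⟩ := hS
      obtain ⟨e1, e2, e3, e4⟩ := key S1 S2 S3 S4 hs1 hs2 hs3 hs4
      simp only [Prod.mk.injEq]
      exact ⟨⟨e1, e2⟩, e3, e4⟩
  rw [hcard, hT]
  rw [Finset.card_product, Finset.card_product, Finset.card_product]
  rw [Finset.card_powersetCard, Finset.card_powersetCard, Finset.card_powersetCard,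
    Finset.card_powersetCard]
  rw [hA1, hA2, hA3, hA4]
  rw [Finset.card_attachFin, Finset.card_attachFin, Finset.card_attachFin,
    Finset.card_attachFin, Finset.card_range, Nat.card_Ico, Nat.card_Ico, Nat.card_Ico]
  rw [show m - 3 * t = 7 * t by omega, show m + 6 * t - m = 6 * t by omega,
    show n - (m + 6 * t) = 4 * t by omega]
  ring

set_option maxHeartbeats 2000000

/-- there is a constant `C(m) > 0` such that for every admissible vector
`k = (k₁₁,k₁₂,k₂₁,k₂₂)`, the total weight of the topic assignments in the lumped class
`{z : k(z) = k}` equals `C(m)` times the explicit expression; in particular the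
stationary distribution `π_L` of the lumped Gibbs sampler is proportional to it. -/
theorem lumped_posterior (m : ℕ) (hm : 10 ∣ m) :
    ∃ C : ℝ, 0 < C ∧ ∀ a b c d : ℕ,
      a ≤ 3 * m / 10 → b ≤ 7 * m / 10 → c ≤ 3 * m / 5 → d ≤ 2 * m / 5 →
      ∑ z ∈ univ.filter (fun z : Fin (2 * m) → Bool =>
          k11 m z = a ∧ k12 m z = b ∧ k21 m z = c ∧ k22 m z = d), W m z
        = C * (((2 * m).choose (a + b + c + d) : ℝ)
                * ((3 * m / 10).choose a : ℝ) * ((7 * m / 10).choose b : ℝ)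
                * ((3 * m / 5).choose c : ℝ) * ((2 * m / 5).choose d : ℝ))
            / (((a + b + c + d : ℝ) + 1) * ((2 * m : ℝ) - (a + b + c + d : ℝ) + 1)
                * (m.choose (a + b) : ℝ) * (m.choose (c + d) : ℝ)
                * ((9 * m / 10).choose (a + c) : ℝ)
                * ((11 * m / 10).choose (b + d) : ℝ)) := by
  obtain ⟨t, rfl⟩ := hm
  have hchoosepos : (0 : ℝ) < ((20 * t).choose (9 * t) : ℝ) := by
    exact_mod_cast Nat.choose_pos (by omega)
  refine ⟨(((10 * t : ℝ) + 1) ^ 2 * ((20 * t).choose (9 * t) : ℝ))⁻¹, ?_, ?_⟩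
  · exact inv_pos.mpr (mul_pos (by positivity) hchoosepos)
  intro a b c d ha hb hc hd
  rw [show 3 * (10 * t) / 10 = 3 * t by omega] at ha
  rw [show 7 * (10 * t) / 10 = 7 * t by omega] at hb
  rw [show 3 * (10 * t) / 5 = 6 * t by omega] at hc
  rw [show 2 * (10 * t) / 5 = 4 * t by omega] at hd
  have hW : ∀ z ∈ univ.filter (fun z : Fin (2 * (10 * t)) → Bool =>
      k11 (10 * t) z = a ∧ k12 (10 * t) z = b ∧ k21 (10 * t) z = c ∧ k22 (10 * t) z = d),
      W (10 * t) z =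
        ((a + b).factorial : ℝ) * ((10 * t - (a + b)).factorial : ℝ)
            / ((10 * t + 1).factorial : ℝ)
        * (((c + d).factorial : ℝ) * ((10 * t - (c + d)).factorial : ℝ)
            / ((10 * t + 1).factorial : ℝ))
        * (((a + c).factorial : ℝ) * ((b + d).factorial : ℝ)
            / ((a + b + c + d + 1).factorial : ℝ))
        * (((9 * t - (a + c)).factorial : ℝ) * ((11 * t - (b + d)).factorial : ℝ)
            / ((20 * t - (a + b + c + d) + 1).factorial : ℝ)) := by
    intro z hz
    simp only [Finset.mem_filter] at hz
    obtain ⟨-, h11, h12, h21, h22⟩ := hz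
    simp only [W, k1d, k2d, kw1, kdd, h11, h12, h21, h22]
    rw [beta_nat, beta_nat, beta_nat, beta_nat]
    rw [show a + b + (10 * t - (a + b)) + 1 = 10 * t + 1 by omega,
      show c + d + (10 * t - (c + d)) + 1 = 10 * t + 1 by omega,
      show a + b + (c + d) - (a + c) = b + d by omega,
      show a + c + (b + d) + 1 = a + b + c + d + 1 by omega,
      show 2 * (10 * t) - (a + b + (c + d)) - (9 * (10 * t) / 10 - (a + c)) = 11 * t - (b + d)
        by omega,
      show 9 * (10 * t) / 10 - (a + c) = 9 * t - (a + c) by omega,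
      show 9 * t - (a + c) + (11 * t - (b + d)) + 1 = 20 * t - (a + b + c + d) + 1 by omega]
  rw [Finset.sum_congr rfl hW, Finset.sum_const, card_class t a b c d, nsmul_eq_mul]
  rw [show 3 * (10 * t) / 10 = 3 * t by omega, show 7 * (10 * t) / 10 = 7 * t by omega,
    show 3 * (10 * t) / 5 = 6 * t by omega, show 2 * (10 * t) / 5 = 4 * t by omega,
    show 9 * (10 * t) / 10 = 9 * t by omega, show 11 * (10 * t) / 10 = 11 * t by omega,
    show 2 * (10 * t) = 20 * t by omega]
  -- now pure arithmetic
  have hab : a + b ≤ 10 * t := by omega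
  have hcd : c + d ≤ 10 * t := by omega
  have hK : a + b + c + d ≤ 20 * t := by omega
  have hac : a + c ≤ 9 * t := by omega
  have hbd : b + d ≤ 11 * t := by omega
  have h920 : 9 * t ≤ 20 * t := by omega
  have hfK : ((a + b + c + d + 1).factorial : ℝ)
      = ((a : ℝ) + b + c + d + 1) * ((a + b + c + d).factorial : ℝ) := by
    have := Nat.factorial_succ (a + b + c + d); exact_mod_cast this
  have hfM : ((10 * t + 1).factorial : ℝ)
      = ((10 * t : ℕ) + 1 : ℝ) * ((10 * t).factorial : ℝ) := by
    exact_mod_cast Nat.factorial_succ (10 * t)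
  have hfKc : ((20 * t - (a + b + c + d) + 1).factorial : ℝ)
      = (((20 * t - (a + b + c + d) : ℕ) : ℝ) + 1)
          * ((20 * t - (a + b + c + d)).factorial : ℝ) := by
    exact_mod_cast Nat.factorial_succ (20 * t - (a + b + c + d))
  push_cast
  rw [Nat.cast_choose ℝ ha, Nat.cast_choose ℝ hb, Nat.cast_choose ℝ hc, Nat.cast_choose ℝ hd,
    Nat.cast_choose ℝ hK, Nat.cast_choose ℝ hab, Nat.cast_choose ℝ hcd,
    Nat.cast_choose ℝ hac, Nat.cast_choose ℝ hbd, Nat.cast_choose ℝ h920,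
    show 20 * t - 9 * t = 11 * t by omega]
  rw [hfK, hfM, hfKc, Nat.cast_sub hK]
  push_cast
  have hx0 : ((a).factorial : ℝ) ≠ 0 := by exact_mod_cast Nat.factorial_ne_zero _
  have hx1 : ((b).factorial : ℝ) ≠ 0 := by exact_mod_cast Nat.factorial_ne_zero _
  have hx2 : ((c).factorial : ℝ) ≠ 0 := by exact_mod_cast Nat.factorial_ne_zero _
  have hx3 : ((d).factorial : ℝ) ≠ 0 := by exact_mod_cast Nat.factorial_ne_zero _
  have hx4 : ((3 * t - a).factorial : ℝ) ≠ 0 := by exact_mod_cast Nat.factorial_ne_zero _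
  have hx5 : ((7 * t - b).factorial : ℝ) ≠ 0 := by exact_mod_cast Nat.factorial_ne_zero _
  have hx6 : ((6 * t - c).factorial : ℝ) ≠ 0 := by exact_mod_cast Nat.factorial_ne_zero _
  have hx7 : ((4 * t - d).factorial : ℝ) ≠ 0 := by exact_mod_cast Nat.factorial_ne_zero _
  have hx8 : ((3 * t).factorial : ℝ) ≠ 0 := by exact_mod_cast Nat.factorial_ne_zero _
  have hx9 : ((7 * t).factorial : ℝ) ≠ 0 := by exact_mod_cast Nat.factorial_ne_zero _
  have hx10 : ((6 * t).factorial : ℝ) ≠ 0 := by exact_mod_cast Nat.factorial_ne_zero _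
  have hx11 : ((4 * t).factorial : ℝ) ≠ 0 := by exact_mod_cast Nat.factorial_ne_zero _
  have hx12 : ((a + b).factorial : ℝ) ≠ 0 := by exact_mod_cast Nat.factorial_ne_zero _
  have hx13 : ((10 * t - (a + b)).factorial : ℝ) ≠ 0 := by exact_mod_cast Nat.factorial_ne_zero _
  have hx14 : ((c + d).factorial : ℝ) ≠ 0 := by exact_mod_cast Nat.factorial_ne_zero _
  have hx15 : ((10 * t - (c + d)).factorial : ℝ) ≠ 0 := by exact_mod_cast Nat.factorial_ne_zero _
  have hx16 : ((10 * t).factorial : ℝ) ≠ 0 := by exact_mod_cast Nat.factorial_ne_zero _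
  have hx17 : ((a + c).factorial : ℝ) ≠ 0 := by exact_mod_cast Nat.factorial_ne_zero _
  have hx18 : ((b + d).factorial : ℝ) ≠ 0 := by exact_mod_cast Nat.factorial_ne_zero _
  have hx19 : ((9 * t - (a + c)).factorial : ℝ) ≠ 0 := by exact_mod_cast Nat.factorial_ne_zero _
  have hx20 : ((11 * t - (b + d)).factorial : ℝ) ≠ 0 := by exact_mod_cast Nat.factorial_ne_zero _
  have hx21 : ((9 * t).factorial : ℝ) ≠ 0 := by exact_mod_cast Nat.factorial_ne_zero _
  have hx22 : ((11 * t).factorial : ℝ) ≠ 0 := by exact_mod_cast Nat.factorial_ne_zero _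
  have hx23 : ((a + b + c + d).factorial : ℝ) ≠ 0 := by exact_mod_cast Nat.factorial_ne_zero _
  have hx24 : ((20 * t - (a + b + c + d)).factorial : ℝ) ≠ 0 := by exact_mod_cast Nat.factorial_ne_zero _
  have hx25 : ((20 * t).factorial : ℝ) ≠ 0 := by exact_mod_cast Nat.factorial_ne_zero _
  have hne1 : ((a : ℝ) + b + c + d + 1) ≠ 0 := by positivity
  have hne2 : (20 * (t : ℝ) - ((a : ℝ) + b + c + d) + 1) ≠ 0 := by
    have : ((a:ℝ)+b+c+d) ≤ 20*t := by exact_mod_cast hK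
    linarith
  have hne4 : (10 * (t : ℝ) + 1) ≠ 0 := by positivity
  set X0 : ℝ := ((a).factorial : ℝ) with hX0
  set X1 : ℝ := ((b).factorial : ℝ) with hX1
  set X2 : ℝ := ((c).factorial : ℝ) with hX2
  set X3 : ℝ := ((d).factorial : ℝ) with hX3
  set X4 : ℝ := ((3 * t - a).factorial : ℝ) with hX4
  set X5 : ℝ := ((7 * t - b).factorial : ℝ) with hX5
  set X6 : ℝ := ((6 * t - c).factorial : ℝ) with hX6
  set X7 : ℝ := ((4 * t - d).factorial : ℝ) with hX7
  set X8 : ℝ := ((3 * t).factorial : ℝ) with hX8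
  set X9 : ℝ := ((7 * t).factorial : ℝ) with hX9
  set X10 : ℝ := ((6 * t).factorial : ℝ) with hX10
  set X11 : ℝ := ((4 * t).factorial : ℝ) with hX11
  set X12 : ℝ := ((a + b).factorial : ℝ) with hX12
  set X13 : ℝ := ((10 * t - (a + b)).factorial : ℝ) with hX13
  set X14 : ℝ := ((c + d).factorial : ℝ) with hX14
  set X15 : ℝ := ((10 * t - (c + d)).factorial : ℝ) with hX15
  set X16 : ℝ := ((10 * t).factorial : ℝ) with hX16
  set X17 : ℝ := ((a + c).factorial : ℝ) with hX17
  set X18 : ℝ := ((b + d).factorial : ℝ) with hX18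
  set X19 : ℝ := ((9 * t - (a + c)).factorial : ℝ) with hX19
  set X20 : ℝ := ((11 * t - (b + d)).factorial : ℝ) with hX20
  set X21 : ℝ := ((9 * t).factorial : ℝ) with hX21
  set X22 : ℝ := ((11 * t).factorial : ℝ) with hX22
  set X23 : ℝ := ((a + b + c + d).factorial : ℝ) with hX23
  set X24 : ℝ := ((20 * t - (a + b + c + d)).factorial : ℝ) with hX24
  set X25 : ℝ := ((20 * t).factorial : ℝ) with hX25
  clear_value X0 X1 X2 X3 X4 X5 X6 X7 X8 X9 X10 X11 X12 X13 X14 X15 X16 X17 X18 X19 X20 X21 X22 X23 X24 X25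
  have hne2b : (2 * (10 * (t:ℝ)) - ((a : ℝ) + b + c + d) + 1) ≠ 0 := by
    have : ((a:ℝ)+b+c+d) ≤ 20*t := by exact_mod_cast hK
    linarith
  field_simp [hx0, hx1, hx2, hx3, hx4, hx5, hx6, hx7, hx8, hx9, hx10, hx11, hx12, hx13, hx14, hx15, hx16, hx17, hx18, hx19, hx20, hx21, hx22, hx23, hx24, hx25, hne1, hne2, hne2b, hne4]
  ring
end

section
/- There exist constants 0 < c₁ ≤ c₂ < ∞ such that for every integer m ≥ 1 and every integer k with 0 ≤ k ≤ m: c₁ ≤ binom(m,k) · √m · √((k/m + 1/m)(1 − k/m + 1/m)) / h(k/m)^m ≤ c₂. -/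
/-- `h(x) = (x^x (1−x)^{1−x})⁻¹` (real powers, with the convention `0⁰ = 1`,
so that `h 0 = h 1 = 1`). -/
noncomputable def hfun (x : ℝ) : ℝ := (x ^ x * (1 - x) ^ (1 - x))⁻¹


open Real

noncomputable def gfun (n : ℕ) : ℝ := Real.sqrt (2*n) * (n:ℝ)^n / Real.exp 1 ^ n

lemma gfun_pos {n : ℕ} (hn : 1 ≤ n) : 0 < gfun n := by
  have : (0:ℝ) < n := by exact_mod_cast hn
  unfold gfun; positivity

lemma fact_eq (n : ℕ) (hn : 1 ≤ n) :
    (n.factorial : ℝ) = Stirling.stirlingSeq n * gfun n := by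
  have h : (0:ℝ) < n := by exact_mod_cast hn
  rw [Stirling.stirlingSeq, gfun, div_pow]
  field_simp

lemma fact_bounds : ∃ L U : ℝ, 0 < L ∧ L ≤ U ∧ ∀ n : ℕ, 1 ≤ n →
    L * gfun n ≤ (n.factorial : ℝ) ∧ (n.factorial : ℝ) ≤ U * gfun n := by
  obtain ⟨L, hL, hLb⟩ := Stirling.stirlingSeq'_bounded_by_pos_constant
  refine ⟨L, Stirling.stirlingSeq 1, hL, by simpa using hLb 0, fun n hn => ?_⟩
  obtain ⟨n, rfl⟩ := Nat.exists_eq_add_of_le hn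
  rw [fact_eq _ (by omega)]
  have h1 : L ≤ Stirling.stirlingSeq (1 + n) := hLb n |>.trans_eq (by ring_nf)
  have h2 : Stirling.stirlingSeq (1 + n) ≤ Stirling.stirlingSeq 1 := by
    have := Stirling.stirlingSeq'_antitone (Nat.zero_le n)
    simpa [Function.comp, Nat.succ_eq_add_one, Nat.add_comm] using this
  have hg := gfun_pos (n := 1 + n) (by omega)
  constructor <;> nlinarith

lemma hfun_pow {m k : ℕ} (hm : 1 ≤ m) (hk : k ≤ m) :
    hfun ((k:ℝ)/m) ^ m = (m:ℝ)^m / ((k:ℝ)^k * ((m-k:ℕ):ℝ)^(m-k)) := by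
  have hm0 : (0:ℝ) < m := by exact_mod_cast hm
  rcases Nat.eq_zero_or_pos k with rfl | hk1
  · simp [hfun, Real.rpow_zero, Real.one_rpow, hm0.ne']
  rcases eq_or_lt_of_le hk with rfl | hkm
  · have : (k:ℝ)/k = 1 := div_self (by positivity)
    simp [hfun, this, Real.rpow_zero, Real.one_rpow]
  set x : ℝ := (k:ℝ)/m with hx
  have hx0 : 0 < x := by positivity
  have hx1 : 1 - x = ((m-k:ℕ):ℝ)/m := by
    rw [Nat.cast_sub hk, hx]; field_simp
  have hmk0 : (0:ℝ) < ((m-k:ℕ):ℝ) := by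
    have : 0 < m - k := by omega
    exact_mod_cast this
  have h1x0 : 0 < 1 - x := by rw [hx1]; positivity
  have key : ∀ (a : ℕ) (y : ℝ), 0 < y → y = (a:ℝ)/m → (y ^ y) ^ m = ((a:ℝ)/m)^a := by
    intro a y hy hya
    rw [← Real.rpow_natCast (y ^ y) m, ← Real.rpow_mul hy.le]
    have : y * m = a := by rw [hya]; field_simp
    rw [this, Real.rpow_natCast, hya]
  have e1 : (x ^ x) ^ m = ((k:ℝ)/m)^k := key k x hx0 rfl
  have e2 : ((1-x) ^ (1-x)) ^ m = (((m-k:ℕ):ℝ)/m)^(m-k) := key (m-k) (1-x) h1x0 hx1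
  rw [hfun, inv_pow, mul_pow, e1, e2, div_pow, div_pow]
  rw [div_mul_div_comm, ← pow_add]
  have : k + (m - k) = m := by omega
  rw [this, inv_div]

lemma sqrt_term {m k : ℕ} (hm : 1 ≤ m) (hk : k ≤ m) :
    Real.sqrt (((k : ℝ)/m + 1/m) * (1 - (k : ℝ)/m + 1/m))
      = Real.sqrt (((k:ℝ)+1) * (((m-k:ℕ):ℝ)+1)) / m := by
  have hm0 : (0:ℝ) < m := by exact_mod_cast hm
  have e1 : (k : ℝ)/m + 1/m = ((k:ℝ)+1)/m := by ring
  have e2 : 1 - (k : ℝ)/m + 1/m = (((m-k:ℕ):ℝ)+1)/m := by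
    rw [Nat.cast_sub hk]
    field_simp
  have h1 : (((k:ℝ)+1)/m) * ((((m-k:ℕ):ℝ)+1)/m)
      = (((k:ℝ)+1) * (((m-k:ℕ):ℝ)+1)) / (m:ℝ)^2 := by ring
  rw [e1, e2, h1, Real.sqrt_div (by positivity), Real.sqrt_sq hm0.le]

lemma xbounds {u v : ℝ} (hu : 1 ≤ u) (hv : 1 ≤ v) :
    u*v ≤ (u+1)*(v+1) ∧ (u+1)*(v+1) ≤ 4*(u*v) := by
  constructor <;> nlinarith

lemma Wsimp (s2m s2k s2b sm sx A B M E1 E2 mr : ℝ)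
    (hA : A ≠ 0) (hB : B ≠ 0) (hM : M ≠ 0) (hE1 : E1 ≠ 0) (hE2 : E2 ≠ 0)
    (hs2k : s2k ≠ 0) (hs2b : s2b ≠ 0) (hmr : mr ≠ 0) :
    (s2m * M / (E1*E2)) / ((s2k*A/E1) * (s2b*B/E2)) * (A*B/M*(sm*sx/mr))
      = s2m*sm*sx/(s2k*s2b*mr) := by
  field_simp

/-- there are constants `0 < c₁ ≤ c₂ < ∞` such that for every `m ≥ 1`
and `0 ≤ k ≤ m`,
`c₁ ≤ binom(m,k)·√m·√((k/m + 1/m)(1 − k/m + 1/m)) / h(k/m)^m ≤ c₂`. -/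
theorem choose_stirling_bounds :
    ∃ c₁ c₂ : ℝ, 0 < c₁ ∧ c₁ ≤ c₂ ∧
      ∀ m k : ℕ, 1 ≤ m → k ≤ m →
        c₁ ≤ (m.choose k : ℝ) * Real.sqrt m
              * Real.sqrt (((k : ℝ)/m + 1/m) * (1 - (k : ℝ)/m + 1/m))
              / hfun ((k : ℝ)/m) ^ m ∧
        (m.choose k : ℝ) * Real.sqrt m
              * Real.sqrt (((k : ℝ)/m + 1/m) * (1 - (k : ℝ)/m + 1/m))
              / hfun ((k : ℝ)/m) ^ m ≤ c₂ := by
  obtain ⟨L, U, hL, hLU, hfb⟩ := fact_bounds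
  have hU : 0 < U := hL.trans_le hLU
  refine ⟨min 1 (L/U^2 * (1/2)), max 2 (U/L^2 * 2), by positivity,
    le_trans (min_le_left _ _) (le_trans one_le_two (le_max_left _ _)), fun m k hm hk => ?_⟩
  have hm0 : (0:ℝ) < m := by exact_mod_cast hm
  have hm1R : (1:ℝ) ≤ m := by exact_mod_cast hm
  rw [hfun_pow hm hk, sqrt_term hm hk]
  set b : ℕ := m - k with hbdef
  have hab : k + b = m := by omega
  have habR : (k:ℝ) + b = m := by exact_mod_cast hab
  set x : ℝ := ((k:ℝ)+1) * ((b:ℝ)+1) with hxdef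
  have hkk : (0:ℝ) < (k:ℝ)^k * (b:ℝ)^b := by
    rcases Nat.eq_zero_or_pos k with rfl | hk1
    · rcases Nat.eq_zero_or_pos b with h | hb1
      · omega
      · have : (0:ℝ) < b := by exact_mod_cast hb1
        simp only [pow_zero, Nat.cast_zero, one_mul]; positivity
    · have hkR : (0:ℝ) < k := by exact_mod_cast hk1
      rcases Nat.eq_zero_or_pos b with h | hb1
      · rw [h]; simp only [pow_zero, Nat.cast_zero, mul_one]; positivity
      · have : (0:ℝ) < b := by exact_mod_cast hb1
        positivity
  have hE : (m.choose k : ℝ) * Real.sqrt m * (Real.sqrt x / m)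
        / ((m:ℝ)^m / ((k:ℝ)^k * (b:ℝ)^b))
      = (m.choose k : ℝ) * ((k:ℝ)^k * (b:ℝ)^b / (m:ℝ)^m * (Real.sqrt m * Real.sqrt x / m)) := by
    rw [div_div_eq_mul_div]
    have hmm : (0:ℝ) < (m:ℝ)^m := by positivity
    field_simp
  rw [hE]
  rcases eq_or_ne (k * b) 0 with hedge | hmid
  · -- k = 0 or k = m
    have hE2 : (m.choose k : ℝ) * ((k:ℝ)^k * (b:ℝ)^b / (m:ℝ)^m * (Real.sqrt m * Real.sqrt x / m))
        = Real.sqrt m * Real.sqrt ((m:ℝ)+1) / m := by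
      rcases Nat.eq_zero_or_pos k with rfl | hk1
      · have hb : b = m := by omega
        simp [hxdef, hb, pow_zero, div_self (by positivity : ((m:ℝ)^m) ≠ 0)]
      · have hb : b = 0 := by
          rcases Nat.mul_eq_zero.mp hedge with h | h
          · omega
          · exact h
        have hkm : k = m := by omega
        simp [hxdef, hb, hkm, pow_zero, Nat.choose_self,
          div_self (by positivity : ((m:ℝ)^m) ≠ 0)]
    rw [hE2]
    have hprod : (Real.sqrt m * Real.sqrt ((m:ℝ)+1))^2 = (m:ℝ) * ((m:ℝ)+1) := by
      rw [mul_pow, Real.sq_sqrt hm0.le, Real.sq_sqrt (by positivity)]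
    have hn1 : (0:ℝ) ≤ Real.sqrt m * Real.sqrt ((m:ℝ)+1) := by positivity
    constructor
    · refine le_trans (min_le_left _ _) ?_
      rw [le_div_iff₀ hm0]
      nlinarith [hprod, hn1, hm0, sq_nonneg (Real.sqrt m * Real.sqrt ((m:ℝ)+1) - m)]
    · refine le_trans ?_ (le_max_left _ _)
      rw [div_le_iff₀ hm0]
      nlinarith [hprod, hn1, hm0, hm1R, sq_nonneg (Real.sqrt m * Real.sqrt ((m:ℝ)+1) - 2*m)]
  · -- middle case: 1 ≤ k, 1 ≤ b
    obtain ⟨hk0, hb0⟩ := Nat.mul_ne_zero_iff.mp hmid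
    have hk1 : 1 ≤ k := Nat.one_le_iff_ne_zero.mpr hk0
    have hb1 : 1 ≤ b := Nat.one_le_iff_ne_zero.mpr hb0
    have hkR : (1:ℝ) ≤ k := by exact_mod_cast hk1
    have hbR : (1:ℝ) ≤ b := by exact_mod_cast hb1
    have hkR0 : (0:ℝ) < k := by linarith
    have hbR0 : (0:ℝ) < b := by linarith
    have hga := gfun_pos hk1
    have hgb := gfun_pos hb1
    have hgm := gfun_pos hm
    have hCeq : (m.choose k : ℝ) = (m.factorial : ℝ) / ((k.factorial : ℝ) * (b.factorial : ℝ)) := by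
      have := Nat.choose_mul_factorial_mul_factorial hk
      have hcast : (m.choose k : ℝ) * (k.factorial : ℝ) * ((m-k).factorial : ℝ)
          = (m.factorial : ℝ) := by exact_mod_cast this
      rw [← hbdef] at hcast
      have h1 : (0:ℝ) < k.factorial := by exact_mod_cast k.factorial_pos
      have h2 : (0:ℝ) < b.factorial := by exact_mod_cast b.factorial_pos
      field_simp
      linarith [hcast]
    obtain ⟨hm1, hm2⟩ := hfb m hm
    obtain ⟨ha1', ha2'⟩ := hfb k hk1
    obtain ⟨hb1', hb2'⟩ := hfb b hb1
    have hfa : (0:ℝ) < k.factorial := by exact_mod_cast k.factorial_pos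
    have hfbb : (0:ℝ) < b.factorial := by exact_mod_cast b.factorial_pos
    have hClo : L * gfun m / (U * gfun k * (U * gfun b)) ≤ (m.choose k : ℝ) := by
      rw [hCeq]
      apply div_le_div₀ (by positivity) hm1 (by positivity)
      exact mul_le_mul ha2' hb2' hfbb.le (by positivity)
    have hChi : (m.choose k : ℝ) ≤ U * gfun m / (L * gfun k * (L * gfun b)) := by
      rw [hCeq]
      apply div_le_div₀ (by positivity) hm2 (by positivity)
      exact mul_le_mul ha1' hb1' (by positivity) (by positivity)
    set S : ℝ := (k:ℝ)^k * (b:ℝ)^b / (m:ℝ)^m * (Real.sqrt m * Real.sqrt x / m) with hSdef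
    have hx0 : (0:ℝ) < x := by rw [hxdef]; positivity
    have hS0 : 0 < S := by
      have h1 : 0 < Real.sqrt m := Real.sqrt_pos.mpr hm0
      have h2 : 0 < Real.sqrt x := Real.sqrt_pos.mpr hx0
      rw [hSdef]; positivity
    set W : ℝ := gfun m / (gfun k * gfun b) * S with hWdef
    have hW0 : 0 < W := by rw [hWdef]; positivity
    have heab : Real.exp 1 ^ k * Real.exp 1 ^ b = Real.exp 1 ^ m := by rw [← pow_add, hab]
    have hWeq : W = Real.sqrt (2*(m:ℕ)) * Real.sqrt m * Real.sqrt x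
        / (Real.sqrt (2*(k:ℕ)) * Real.sqrt (2*(b:ℕ)) * m) := by
      rw [hWdef, hSdef]
      unfold gfun
      rw [← heab]
      exact Wsimp _ _ _ _ _ _ _ _ _ _ _ (by positivity) (by positivity) (by positivity)
        (by positivity) (by positivity) (by positivity) (by positivity) (by positivity)
    have hWsq : W^2 = x / (2 * ((k:ℝ) * b)) := by
      rw [hWeq, div_pow, mul_pow, mul_pow, mul_pow, mul_pow,
        Real.sq_sqrt (by positivity : (0:ℝ) ≤ 2*(m:ℕ)),
        Real.sq_sqrt (by positivity : (0:ℝ) ≤ 2*(k:ℕ)),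
        Real.sq_sqrt (by positivity : (0:ℝ) ≤ 2*(b:ℕ)),
        Real.sq_sqrt hm0.le, Real.sq_sqrt hx0.le]
      field_simp
    obtain ⟨hxlo, hxhi⟩ := xbounds hkR hbR
    rw [← hxdef] at hxlo hxhi
    have hkb0 : (0:ℝ) < (k:ℝ)*b := mul_pos hkR0 hbR0
    have hW2lo : (1/2:ℝ)^2 ≤ W^2 := by
      rw [hWsq, le_div_iff₀ (by positivity)]
      linarith only [hxlo, hkb0]
    have hW2hi : W^2 ≤ 2^2 := by
      rw [hWsq, div_le_iff₀ (by positivity)]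
      linarith only [hxhi, hkb0]
    have hWlo : 1/2 ≤ W := by
      have h := Real.sqrt_le_sqrt hW2lo
      rwa [Real.sqrt_sq (by norm_num : (0:ℝ) ≤ 1/2), Real.sqrt_sq hW0.le] at h
    have hWhi : W ≤ 2 := by
      have h := Real.sqrt_le_sqrt hW2hi
      rwa [Real.sqrt_sq hW0.le, Real.sqrt_sq (by norm_num : (0:ℝ) ≤ 2)] at h
    constructor
    · calc min 1 (L/U^2 * (1/2)) ≤ L/U^2 * (1/2) := min_le_right _ _
        _ ≤ L/U^2 * W := by
            apply mul_le_mul_of_nonneg_left hWlo (by positivity)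
        _ = L * gfun m / (U * gfun k * (U * gfun b)) * S := by
            rw [hWdef]; field_simp
        _ ≤ (m.choose k : ℝ) * S := mul_le_mul_of_nonneg_right hClo hS0.le
    · calc (m.choose k : ℝ) * S ≤ U * gfun m / (L * gfun k * (L * gfun b)) * S :=
            mul_le_mul_of_nonneg_right hChi hS0.le
        _ = U/L^2 * W := by rw [hWdef]; field_simp
        _ ≤ U/L^2 * 2 := by
            apply mul_le_mul_of_nonneg_left hWhi (by positivity)
        _ ≤ max 2 (U/L^2 * 2) := le_max_right _ _
end
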